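/- arXiv:math/0602011 — 6 statements merged into one kernel-verified Lean document; each statement's English description precedes it below -/
import Mathlib

section
/- A transitive group G of permutations of a set Ω is primitive if and only if for every pair of distinct elements α, β ∈ Ω, the graph with vertex set Ω and edge set equal to the G-orbit of the ordered pair (α, β) is connected (where connectedness is with respect to the underlying undirected reachability relation). -/
open Pointwise

/-- A permutation preserves a directed edge relation. -/
def DPreserves {V : Type*} (E : V → V → Prop) (g : Equiv.Perm V) : Prop :=
  ∀ a b : V, E (g a) (g b) ↔ E a b

/-- The automorphism group of the directed graph with edge relation `E`,
as a subgroup of the symmetric group. -/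
def autSub {V : Type*} (E : V → V → Prop) : Subgroup (Equiv.Perm V) where
  carrier := {g | DPreserves E g}
  one_mem' := fun _ _ => Iff.rfl
  mul_mem' := by
    intro g h hg hh a b
    exact (hg (h a) (h b)).trans (hh a b)
  inv_mem' := by
    intro g hg a b
    simpa using (hg (g⁻¹ a) (g⁻¹ b)).symm

/-- A subgroup of the symmetric group acts primitively: it is transitive and the only
invariant equivalence relations are the trivial and the universal ones. -/
def IsPrimitiveSub {X : Type*} (G : Subgroup (Equiv.Perm X)) : Prop :=
  (∀ a b : X, ∃ g ∈ G, g a = b) ∧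
    ∀ r : Setoid X, (∀ g ∈ G, ∀ a b : X, r.r a b ↔ r.r (g a) (g b)) →
      (∀ a b : X, r.r a b ↔ a = b) ∨ ∀ a b : X, r.r a b

/-- A subgroup of the symmetric group acts regularly: transitively with trivial
point stabilisers. -/
def IsRegularSub {X : Type*} (G : Subgroup (Equiv.Perm X)) : Prop :=
  (∀ a b : X, ∃ g ∈ G, g a = b) ∧ ∀ g ∈ G, ∀ a : X, g a = a → g = 1

/-- `a` is a cut vertex of `Γ`: deleting it disconnects the graph. -/
def IsCutVertexOf {V : Type*} (Γ : SimpleGraph V) (a : V) : Prop :=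
  ¬ (Γ.induce {v | v ≠ a}).Preconnected

/-- `Γ` is connected and has connectivity one. -/
def HasConnOne {V : Type*} (Γ : SimpleGraph V) : Prop :=
  Γ.Connected ∧ ∃ a, IsCutVertexOf Γ a

/-- `B` is (the vertex set of) a block of `Γ`: a connected induced subgraph with no cut
vertex of its own, maximal with these properties. -/
def IsBlockOf {V : Type*} (Γ : SimpleGraph V) (B : Set V) : Prop :=
  (Γ.induce B).Connected ∧ (∀ b ∈ B, (Γ.induce (B \ {b})).Preconnected) ∧
    ∀ C : Set V, B ⊆ C → (Γ.induce C).Connected →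
      (∀ c ∈ C, (Γ.induce (C \ {c})).Preconnected) → B = C

/-- Vertex type of the block-cut-vertex tree: cut vertices plus blocks. -/
def BCVertex {V : Type*} (Γ : SimpleGraph V) : Type _ :=
  {a : V // IsCutVertexOf Γ a} ⊕ {B : Set V // IsBlockOf Γ B}

/-- The block-cut-vertex tree: a cut vertex is adjacent to the blocks containing it. -/
def bcTree {V : Type*} (Γ : SimpleGraph V) : SimpleGraph (BCVertex Γ) :=
  SimpleGraph.fromRel (fun x y =>
    ∃ (a : {a : V // IsCutVertexOf Γ a}) (B : {B : Set V // IsBlockOf Γ B}),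
      x = Sum.inl a ∧ y = Sum.inr B ∧ (a : V) ∈ (B : Set V))

/-- The stabiliser (in the full symmetric group) of a vertex of the block-cut-vertex
tree: the point stabiliser for a cut vertex, the setwise stabiliser for a block. -/
def bcStab {V : Type*} {Γ : SimpleGraph V} (x : BCVertex Γ) : Subgroup (Equiv.Perm V) :=
  match x with
  | Sum.inl a => MulAction.stabilizer (Equiv.Perm V) (a : V)
  | Sum.inr B => MulAction.stabilizer (Equiv.Perm V) (B : Set V)

/-- `z` lies on a geodesic between `a` and `b`. -/
def OnGeodesic {W : Type*} (T : SimpleGraph W) (a b z : W) : Prop :=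
  T.dist a z + T.dist z b = T.dist a b

/-- `a` and `b` lie in the same connected component of `T` with the vertex `y` deleted. -/
def SameCompAvoiding {W : Type*} (T : SimpleGraph W) (y a b : W) : Prop :=
  ∃ (ha : a ≠ y) (hb : b ≠ y), (T.induce {v | v ≠ y}).Reachable ⟨a, ha⟩ ⟨b, hb⟩

/-- `B` and `C` are isomorphic as directed graphs (with edge relation `E`). -/
def BlocksIsomorphic {V : Type*} (E : V → V → Prop) (B C : Set V) : Prop :=
  ∃ e : B ≃ C, ∀ a b : B, E (a : V) (b : V) ↔ E (e a : V) (e b : V)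

/-- The automorphism group of the directed graph induced on `B`. -/
def BlockAut {V : Type*} (E : V → V → Prop) (B : Set V) : Subgroup (Equiv.Perm B) :=
  autSub (fun a b : B => E (a : V) (b : V))

/-- `B` has at least three vertices. -/
def HasThreeVertices {V : Type*} (B : Set V) : Prop :=
  ∃ x y z : V, x ∈ B ∧ y ∈ B ∧ z ∈ B ∧ x ≠ y ∧ x ≠ z ∧ y ≠ z

/-- Primitivity for an abstract group action: transitivity, and the only invariant
equivalence relations are the trivial and the universal ones. -/
def IsPrimAction (G Ω : Type*) [Group G] [MulAction G Ω] : Prop :=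
  MulAction.IsPretransitive G Ω ∧
    ∀ r : Setoid Ω, (∀ (g : G) (a b : Ω), r.r a b ↔ r.r (g • a) (g • b)) →
      (∀ a b : Ω, r.r a b ↔ a = b) ∨ ∀ a b : Ω, r.r a b

/-! The orbital graph of `(α, β)` is connected iff the equivalence relation generated by the
orbital of `(α, β)` is universal. That relation is `G`-invariant, and it is the smallest
`G`-invariant equivalence relation relating `α` and `β`; so the nontrivial invariant equivalence
relations are universal exactly when all these are. -/

open Function Relation Relation.EqvGen

namespace MulAction

variable (G : Type*) {Ω : Type*} [Group G] [MulAction G Ω]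

def orbital (α β : Ω) (u v : Ω) : Prop :=
  ∃ g : G, g • α = u ∧ g • β = v

variable {G}

theorem orbital_self (α β : Ω) : orbital G α β α β :=
  ⟨1, one_smul G α, one_smul G β⟩

theorem orbital.smul {α β u v : Ω} (g : G) (h : orbital G α β u v) :
    orbital G α β (g • u) (g • v) := by
  obtain ⟨k, rfl, rfl⟩ := h
  exact ⟨g * k, mul_smul g k α, mul_smul g k β⟩

theorem eqvGen_orbital_smul_iff {α β u v : Ω} (g : G) :
    EqvGen (orbital G α β) (g • u) (g • v) ↔ EqvGen (orbital G α β) u v := by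
  have smul : ∀ g : G, EqvGen (orbital G α β) ≤ (EqvGen (orbital G α β) on (g • ·)) :=
    fun g => eqvGen_le fun _ _ h => .rel _ _ (h.smul g)
  refine ⟨fun h => ?_, smul g u v⟩
  simpa [onFun] using smul g⁻¹ _ _ h

theorem eqvGen_orbital_le {α β : Ω} (r : Setoid Ω)
    (hr : ∀ (g : G) (a b : Ω), r a b → r (g • a) (g • b)) (hαβ : r α β) :
    EqvGen (orbital G α β) ≤ r :=
  eqvGen_le <| by
    rintro _ _ ⟨g, rfl, rfl⟩
    exact hr g α β hαβ

end MulAction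

open MulAction in
/-- Higman. A transitive group is primitive iff all its orbital graphs
are connected. -/
theorem stmt1 {G Ω : Type*} [Group G] [MulAction G Ω]
    (htrans : MulAction.IsPretransitive G Ω) :
    IsPrimAction G Ω ↔
      ∀ α β : Ω, α ≠ β → ∀ x y : Ω,
        Relation.ReflTransGen
          (fun u v => (∃ g : G, g • α = u ∧ g • β = v) ∨ (∃ g : G, g • α = v ∧ g • β = u))
          x y := by
  have reachable_iff_eqvGen : ∀ α β x y : Ω, ReflTransGen
      (fun u v => (∃ g : G, g • α = u ∧ g • β = v) ∨ (∃ g : G, g • α = v ∧ g • β = u)) x y ↔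
      EqvGen (orbital G α β) x y := fun α β x y => by
    rw [← reflTransGen_symmGen]; rfl
  simp only [reachable_iff_eqvGen]
  constructor
  · rintro ⟨-, hprim⟩ α β hne
    rcases hprim (EqvGen.setoid (orbital G α β))
      (fun g a b => (eqvGen_orbital_smul_iff g).symm) with htriv | huniv
    · exact absurd ((htriv α β).1 (.rel _ _ (orbital_self α β))) hne
    · exact huniv
  · refine fun hconn => ⟨htrans, fun r hr => or_iff_not_imp_left.2 fun hnontriv => ?_⟩
    push Not at hnontriv
    obtain ⟨α, β, ⟨hαβ, hne⟩ | ⟨hnot, rfl⟩⟩ := hnontriv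
    · exact fun x y => eqvGen_orbital_le r (fun g a b => (hr g a b).1) hαβ x y (hconn α β hne x y)
    · exact absurd (r.refl α) hnot
end

section
/- Let T be a tree, let α, y be vertices of T, and let g be an automorphism of T fixing α but not fixing y. If a vertex δ of T does not lie in the connected component of T ∖ {y} containing α, then the distance satisfies d_T(y, δ^g) > d_T(y, δ). -/
open Pointwise

section Stmt3Aux
open SimpleGraph

private lemma iso_dist_le {W : Type*} {T : SimpleGraph W} (e : T ≃g T) (u v : W) :
    T.dist (e u) (e v) ≤ T.dist u v := by
  by_cases hr : T.Reachable u v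
  · obtain ⟨p, hp⟩ := hr.exists_walk_length_eq_dist
    calc T.dist (e u) (e v) ≤ (p.map e.toHom).length := SimpleGraph.dist_le _
      _ = p.length := SimpleGraph.Walk.length_map _ _
      _ = T.dist u v := hp
  · rw [SimpleGraph.dist_eq_zero_of_not_reachable hr]
    apply Nat.le_zero.mpr
    apply SimpleGraph.dist_eq_zero_of_not_reachable
    intro hre
    have h2 := hre.map e.symm.toHom
    refine hr ?_
    simpa using h2

private lemma iso_dist_eq {W : Type*} {T : SimpleGraph W} (g : T ≃g T) (a b : W) :
    T.dist (g a) (g b) = T.dist a b := by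
  refine le_antisymm (iso_dist_le g a b) ?_
  have := iso_dist_le g.symm (g a) (g b)
  simpa using this

private lemma walk_avoid {W : Type*} {T : SimpleGraph W} {a b y : W}
    (w : T.Walk a b) (hw : y ∉ w.support) (ha : a ≠ y) (hb : b ≠ y) :
    (T.induce {v | v ≠ y}).Reachable ⟨a, ha⟩ ⟨b, hb⟩ := by
  induction w with
  | nil => rfl
  | @cons u c d hadj p ih =>
    simp only [SimpleGraph.Walk.support_cons, List.mem_cons] at hw
    push_neg at hw
    have hc : c ≠ y := fun h => hw.2 (h ▸ p.start_mem_support)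
    have h1 : (T.induce {v | v ≠ y}).Adj ⟨u, ha⟩ ⟨c, hc⟩ := by
      simp [hadj]
    exact h1.reachable.trans (ih hw.2 hc hb)

private lemma path_length_eq_dist {W : Type*} {T : SimpleGraph W} (hT : T.IsTree)
    {a b : W} (p : T.Walk a b) (hp : p.IsPath) : p.length = T.dist a b := by
  classical
  obtain ⟨q, hq⟩ := hT.isConnected.exists_walk_length_eq_dist a b
  have huniq := hT.IsAcyclic.path_unique ⟨p, hp⟩ ⟨q.bypass, q.bypass_isPath⟩
  have : p = q.bypass := congrArg Subtype.val huniq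
  refine le_antisymm ?_ (SimpleGraph.dist_le p)
  calc p.length = q.bypass.length := by rw [this]
    _ ≤ q.length := q.length_bypass_le
    _ = T.dist a b := hq

private lemma geodesic_through {W : Type*} {T : SimpleGraph W} (hT : T.IsTree)
    {a b y : W} (h : ¬ SameCompAvoiding T y a b) :
    T.dist a y + T.dist y b = T.dist a b := by
  classical
  rcases eq_or_ne a y with rfl | ha
  · simp
  rcases eq_or_ne b y with rfl | hb
  · simp
  obtain ⟨q, hq⟩ := hT.isConnected.exists_walk_length_eq_dist a b
  set p := q.bypass with hpdef
  have hp : p.IsPath := q.bypass_isPath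
  have hy : y ∈ p.support := by
    by_contra hny
    exact h ⟨ha, hb, walk_avoid p hny ha hb⟩
  have h1 : (p.takeUntil y hy).length = T.dist a y :=
    path_length_eq_dist hT _ (hp.takeUntil hy)
  have h2 : (p.dropUntil y hy).length = T.dist y b :=
    path_length_eq_dist hT _ (hp.dropUntil hy)
  have h3 : (p.takeUntil y hy).length + (p.dropUntil y hy).length = p.length := by
    rw [← SimpleGraph.Walk.length_append, SimpleGraph.Walk.take_spec]
  have h4 : p.length = T.dist a b := path_length_eq_dist hT p hp
  omega

private lemma samecomp_map {W : Type*} {T : SimpleGraph W} (g : T ≃g T) {y a b : W}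
    (h : SameCompAvoiding T y a b) : SameCompAvoiding T (g y) (g a) (g b) := by
  obtain ⟨ha, hb, hr⟩ := h
  have hga : g a ≠ g y := fun hh => ha (g.injective hh)
  have hgb : g b ≠ g y := fun hh => hb (g.injective hh)
  refine ⟨hga, hgb, ?_⟩
  let f : T.induce {v | v ≠ y} →g T.induce {v | v ≠ g y} :=
    { toFun := fun v => ⟨g v.1, fun hh => v.2 (g.injective hh)⟩
      map_rel' := by
        intro u v huv
        simp only [SimpleGraph.comap_adj, Function.Embedding.coe_subtype] at huv ⊢
        exact g.map_adj_iff.mpr huv }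
  exact hr.map f

end Stmt3Aux

/-- In a tree, if `g` fixes `α` but not `y`, and `δ` is not in the component
of `T ∖ {y}` containing `α`, then `g` moves `δ` further from `y`. -/
theorem stmt3 {W : Type*} (T : SimpleGraph W) (hT : T.IsTree)
    (g : T ≃g T) (α y δ : W) (hα : g α = α) (hy : g y ≠ y)
    (hδ : ¬ SameCompAvoiding T y α δ) :
    T.dist y δ < T.dist y (g δ) := by
  have hδ' : ¬ SameCompAvoiding T (g y) α (g δ) := by
    intro h
    apply hδ
    have h2 := samecomp_map g.symm h
    have hαs : g.symm α = α := by conv_lhs => rw [← hα, RelIso.symm_apply_apply]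
    simpa [hαs] using h2
  -- y is in the same component as α avoiding g y
  have hyα : SameCompAvoiding T (g y) α y := by
    by_contra hcon
    have h1 := geodesic_through hT hcon
    have h2 : T.dist α (g y) = T.dist α y := by
      conv_lhs => rw [← hα]
      exact iso_dist_eq g α y
    have h3 : T.dist (g y) y = 0 := by omega
    exact hy (hT.isConnected.dist_eq_zero_iff.mp h3)
  have hyδ : ¬ SameCompAvoiding T (g y) y (g δ) := by
    intro ⟨h1, h2, hr⟩
    obtain ⟨h3, h4, hr'⟩ := hyα
    exact hδ' ⟨h3, h2, hr'.trans hr⟩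
  have key := geodesic_through hT hyδ
  have hdist : T.dist (g y) (g δ) = T.dist y δ := iso_dist_eq g y δ
  have hpos : 0 < T.dist y (g y) :=
    hT.isConnected.pos_dist_of_ne (Ne.symm hy)
  omega
end

section
/- Let T be a tree with vertices α, β, y such that y lies strictly between α and β on the geodesic from α to β. Let G act on T by automorphisms. If g ∈ G fixes α but not y, and δ is a vertex not in the component of T ∖ {y} containing α, then δ^g is not in the component of T ∖ {y} containing β. -/
open Pointwise

/-! In a tree, deleting `y` separates `a` from `b` exactly when every walk from `a` to `b` passes
through `y`, i.e. when `y` lies on the geodesic from `a` to `b`, and a vertex of a geodesic is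
determined by its distance from the start. Since `g` fixes `α` and `δ` is separated
from `α` by `y`, the vertex `g y` lies on the geodesic from `α` to `g δ` at distance `dist α y`.
If `g δ` were in the component of `β`, which `y` separates from `α`, then `y` would lie on that
geodesic too, forcing `g y = y`. -/

open SimpleGraph

namespace SimpleGraph

variable {V V' : Type*} {G : SimpleGraph V} {G' : SimpleGraph V'}

lemma Hom.edist_le (f : G →g G') (u v : V) : G'.edist (f u) (f v) ≤ G.edist u v := by
  by_cases h : G.Reachable u v
  · obtain ⟨p, hp⟩ := h.exists_walk_length_eq_edist
    rw [← hp, ← Walk.length_map f]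
    exact (p.map f).edist_le
  · simp [edist_eq_top_of_not_reachable h]

lemma Iso.edist_eq (g : G ≃g G') (u v : V) : G'.edist (g u) (g v) = G.edist u v :=
  le_antisymm (Hom.edist_le g.toHom u v) <| by
    simpa using Hom.edist_le g.symm.toHom (g u) (g v)

lemma Iso.dist_eq (g : G ≃g G') (u v : V) : G'.dist (g u) (g v) = G.dist u v := by
  simp only [dist, Iso.edist_eq]

lemma Walk.getVert_dist_eq {a b z : V} {p : G.Walk a b} (hp : p.length = G.dist a b)
    (hz : z ∈ p.support) : p.getVert (G.dist a z) = z := by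
  classical
  rw [← length_eq_dist_of_subwalk hp (p.isSubwalk_takeUntil hz), p.getVert_length_takeUntil hz]

end SimpleGraph

section Geodesics

variable {W W' : Type*} {T : SimpleGraph W} {T' : SimpleGraph W'}

lemma SameCompAvoiding.symm {y a b : W} (h : SameCompAvoiding T y a b) :
    SameCompAvoiding T y b a :=
  let ⟨ha, hb, hr⟩ := h
  ⟨hb, ha, hr.symm⟩

lemma SameCompAvoiding.trans {y a b c : W} (hab : SameCompAvoiding T y a b)
    (hbc : SameCompAvoiding T y b c) : SameCompAvoiding T y a c :=
  let ⟨ha, _, hr⟩ := hab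
  let ⟨_, hc, hr'⟩ := hbc
  ⟨ha, hc, hr.trans hr'⟩

lemma sameCompAvoiding_iff_exists_walk {y a b : W} :
    SameCompAvoiding T y a b ↔ ∃ w : T.Walk a b, y ∉ w.support := by
  constructor
  · rintro ⟨_, _, ⟨p⟩⟩
    let q := p.map (Embedding.induce {v | v ≠ y}).toHom
    have hq : y ∉ q.support := by
      simp only [q, Walk.support_map]
      simp
    exact ⟨q, hq⟩
  · rintro ⟨w, hw⟩
    have hsupp : ∀ v ∈ w.support, v ∈ {v | v ≠ y} := fun v hv hvy => hw (hvy ▸ hv)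
    exact ⟨hsupp a w.start_mem_support, hsupp b w.end_mem_support, ⟨w.induce _ hsupp⟩⟩

lemma OnGeodesic.map (g : T ≃g T') {a b y : W} (h : OnGeodesic T a b y) :
    OnGeodesic T' (g a) (g b) (g y) := by
  simpa only [OnGeodesic, Iso.dist_eq] using h

lemma SimpleGraph.Connected.onGeodesic_of_forall_mem_support (hT : T.Connected) {a b y : W}
    (h : ∀ w : T.Walk a b, y ∈ w.support) : OnGeodesic T a b y := by
  classical
  obtain ⟨p, hp⟩ := hT.exists_walk_length_eq_dist a b
  have hy := h p
  have htake : T.dist a y ≤ (p.takeUntil y hy).length := dist_le _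
  have hdrop : T.dist y b ≤ (p.dropUntil y hy).length := dist_le _
  have hsplit : (p.takeUntil y hy).length + (p.dropUntil y hy).length = T.dist a b := by
    rw [← Walk.length_append, p.take_spec hy, hp]
  have htri : T.dist a b ≤ T.dist a y + T.dist y b := hT.dist_triangle
  unfold OnGeodesic
  omega

lemma SimpleGraph.IsTree.mem_support_of_onGeodesic (hT : T.IsTree) {a b y : W}
    (h : OnGeodesic T a b y) (w : T.Walk a b) : y ∈ w.support := by
  classical
  obtain ⟨p, hp⟩ := hT.connected.exists_walk_length_eq_dist a y
  obtain ⟨q, hq⟩ := hT.connected.exists_walk_length_eq_dist y b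
  have hpq : (p.append q).IsPath :=
    (p.append q).isPath_of_length_eq_dist (by rw [Walk.length_append, hp, hq, h])
  have := hT.isAcyclic.subsingleton_path a b
  have huniq : w.bypass = p.append q :=
    congrArg Subtype.val (Subsingleton.elim ⟨w.bypass, w.bypass_isPath⟩ ⟨_, hpq⟩)
  apply w.support_bypass_subset_support
  rw [huniq, Walk.mem_support_append_iff]
  exact Or.inl p.end_mem_support

lemma SimpleGraph.IsTree.onGeodesic_iff_not_sameCompAvoiding (hT : T.IsTree) {a b y : W} :
    OnGeodesic T a b y ↔ ¬ SameCompAvoiding T y a b := by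
  rw [sameCompAvoiding_iff_exists_walk, not_exists]
  simp only [not_not]
  exact ⟨hT.mem_support_of_onGeodesic, hT.connected.onGeodesic_of_forall_mem_support⟩

lemma SimpleGraph.IsTree.eq_of_onGeodesic_of_dist_eq (hT : T.IsTree) {a b y y' : W}
    (h : OnGeodesic T a b y) (h' : OnGeodesic T a b y') (hd : T.dist a y = T.dist a y') :
    y = y' := by
  obtain ⟨p, hp⟩ := hT.connected.exists_walk_length_eq_dist a b
  rw [← Walk.getVert_dist_eq hp (hT.mem_support_of_onGeodesic h p), hd,
    Walk.getVert_dist_eq hp (hT.mem_support_of_onGeodesic h' p)]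

end Geodesics

theorem stmt4_general {W : Type*} (T : SimpleGraph W) (hT : T.IsTree)
    (g : T ≃g T) (α β y δ : W)
    (hgeo : OnGeodesic T α β y)
    (hα : g α = α) (hy : g y ≠ y)
    (hδ : ¬ SameCompAvoiding T y α δ) :
    ¬ SameCompAvoiding T y β (g δ) := by
  intro hβgδ
  have hα_sep_β := hT.onGeodesic_iff_not_sameCompAvoiding.mp hgeo
  have hy_α_gδ : OnGeodesic T α (g δ) y := hT.onGeodesic_iff_not_sameCompAvoiding.mpr
    fun hαgδ => hα_sep_β (hαgδ.trans hβgδ.symm)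
  have hgy_α_gδ : OnGeodesic T α (g δ) (g y) := by
    simpa only [hα] using (hT.onGeodesic_iff_not_sameCompAvoiding.mpr hδ).map g
  have hdist : T.dist α (g y) = T.dist α y := by
    rw [← Iso.dist_eq g α y, hα]
  exact hy (hT.eq_of_onGeodesic_of_dist_eq hgy_α_gδ hy_α_gδ hdist)

/-- In a tree, with `y` strictly between `α` and `β`, if `g` fixes `α` but
not `y` and `δ` is not in the component of `T ∖ {y}` containing `α`, then `g δ` is not in
the component of `T ∖ {y}` containing `β`. -/
theorem stmt4 {W : Type*} (T : SimpleGraph W) (hT : T.IsTree)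
    (g : T ≃g T) (α β y δ : W)
    (hyα : y ≠ α) (hyβ : y ≠ β) (hgeo : OnGeodesic T α β y)
    (hα : g α = α) (hy : g y ≠ y)
    (hδ : ¬ SameCompAvoiding T y α δ) :
    ¬ SameCompAvoiding T y β (g δ) :=
  stmt4_general T hT g α β y δ hgeo hα hy hδ
end

section
/- Let G act on a set and on a tree T compatibly, with α, β distinct points and y a vertex of T such that G_{α,y} = G_{β,y}. Suppose γ is a point with G_{α,y} ≤ G_γ. Then for any g_1, …, g_n ∈ G_α and h_1, …, h_n ∈ G_β, there exists m ≤ n and elements g'_2, …, g'_m ∈ G_α ∖ G_y, g'_1 ∈ (G_α ∖ G_y) ∪ {1}, h'_1, …, h'_{m−1} ∈ G_β ∖ G_y, h'_m ∈ (G_β ∖ G_y) ∪ {1} such that γ^{g'_1 h'_1 ⋯ g'_m h'_m} = γ^{g_1 h_1 ⋯ g_n h_n}. -/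
open Pointwise

section Stmt5Aux

variable {G Ω : Type*} [Group G] [MulAction G Ω]

private def nfold (γ : Ω) {m : ℕ} (g' h' : Fin m → G) : Ω :=
  (List.ofFn fun i => (g' i, h' i)).foldl (fun (x : Ω) p => p.2 • (p.1 • x)) γ

private lemma nfold_zero (γ : Ω) (g' h' : Fin 0 → G) : nfold γ g' h' = γ := by
  simp [nfold]

private lemma nfold_succ (γ : Ω) {m : ℕ} (g' h' : Fin (m+1) → G) :
    nfold γ g' h' = h' (Fin.last m) • (g' (Fin.last m) •
      nfold γ (fun i => g' i.castSucc) (fun i => h' i.castSucc)) := by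
  unfold nfold
  rw [List.ofFn_succ']
  simp [List.foldl_concat]

private def NF (A B Y : Subgroup G) (γ : Ω) {m : ℕ} (g' h' : Fin m → G) (δ : Ω) : Prop :=
  (∀ i : Fin m, 0 < (i : ℕ) → g' i ∈ A ∧ g' i ∉ Y) ∧
  (∀ i : Fin m, (i : ℕ) = 0 → (g' i ∈ A ∧ g' i ∉ Y) ∨ g' i = 1) ∧
  (∀ i : Fin m, (i : ℕ) < m - 1 → h' i ∈ B ∧ h' i ∉ Y) ∧
  (∀ i : Fin m, (i : ℕ) = m - 1 → (h' i ∈ B ∧ h' i ∉ Y) ∨ h' i = 1) ∧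
  nfold γ g' h' = δ

private lemma NF.trunc {A B Y : Subgroup G} {γ : Ω} {k : ℕ}
    {g' h' : Fin (k+1) → G} {δ : Ω} (hNF : NF A B Y γ g' h' δ) :
    NF A B Y γ (fun i : Fin k => g' i.castSucc) (fun i => h' i.castSucc)
      (nfold γ (fun i : Fin k => g' i.castSucc) (fun i => h' i.castSucc)) := by
  obtain ⟨h1, h2, h3, h4, -⟩ := hNF
  refine ⟨fun i hi => h1 i.castSucc (by simpa using hi),
          fun i hi => h2 i.castSucc (by simpa using hi),
          fun i _ => h3 i.castSucc (by simp [i.isLt]),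
          fun i _ => Or.inl (h3 i.castSucc (by simp [i.isLt])), rfl⟩


private lemma NF.last_g {A B Y : Subgroup G} {γ : Ω} {k : ℕ}
    {g' h' : Fin (k+1) → G} {δ : Ω} (hNF : NF A B Y γ g' h' δ) :
    g' (Fin.last k) ∈ A := by
  obtain ⟨h1, h2, -, -, -⟩ := hNF
  rcases Nat.eq_zero_or_pos k with hk | hk
  · subst hk
    rcases h2 (Fin.last 0) rfl with h | h
    · exact h.1
    · rw [h]; exact one_mem A
  · exact (h1 (Fin.last k) hk).1

private lemma NF.last_h {A B Y : Subgroup G} {γ : Ω} {k : ℕ}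
    {g' h' : Fin (k+1) → G} {δ : Ω} (hNF : NF A B Y γ g' h' δ) :
    h' (Fin.last k) ∈ B := by
  obtain ⟨-, -, -, h4, -⟩ := hNF
  rcases h4 (Fin.last k) (by simp) with h | h
  · exact h.1
  · rw [h]; exact one_mem B

private lemma mulB (A B Y : Subgroup G) (γ : Ω)
    (hYA : ∀ g, g ∈ B → g ∈ Y → g ∈ A)
    (hYB : ∀ g, g ∈ A → g ∈ Y → g ∈ B)
    (hγc : ∀ g, g ∈ A → g ∈ Y → g • γ = γ) :
    ∀ m : ℕ, ∀ (g' h' : Fin m → G) (δ : Ω) (b : G), b ∈ B →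
      NF A B Y γ g' h' δ →
      ∃ m', m' ≤ max m 1 ∧ ∃ g'' h'' : Fin m' → G, NF A B Y γ g'' h'' (b • δ) := by
  intro m
  induction m using Nat.strong_induction_on with
  | _ m IH =>
    intro g' h' δ b hb hNF
    match m with
    | 0 =>
      have hδ : δ = γ := by
        obtain ⟨-, -, -, -, h5⟩ := hNF
        rw [← h5, nfold_zero]
      by_cases hbY : b ∈ Y
      · refine ⟨0, by simp, g', h', ?_⟩
        obtain ⟨h1, h2, h3, h4, h5⟩ := hNF
        refine ⟨h1, h2, h3, h4, ?_⟩
        rw [h5, hδ, hγc b (hYA b hb hbY) hbY]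
      · refine ⟨1, le_refl _, fun _ => 1, fun _ => b, ?_⟩
        refine ⟨fun i hi => absurd hi (by omega), fun i _ => Or.inr rfl,
                fun i hi => absurd hi (by omega), fun i _ => Or.inl ⟨hb, hbY⟩, ?_⟩
        rw [hδ]
        simp [nfold]
    | k + 1 =>
      set p := g' (Fin.last k) with hp
      set q := h' (Fin.last k) with hq
      set δ' := nfold γ (fun i : Fin k => g' i.castSucc) (fun i => h' i.castSucc) with hδ'
      have hpA : p ∈ A := hNF.last_g
      have hqB : q ∈ B := hNF.last_h
      have hδeq : δ = q • (p • δ') := by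
        obtain ⟨-, -, -, -, h5⟩ := hNF
        rw [← h5, nfold_succ]
      have hval : b • δ = (b * q) • (p • δ') := by
        rw [hδeq, smul_smul, smul_smul, mul_assoc]
      by_cases hbq : b * q ∈ Y
      · -- b*q ∈ B ⊓ Y ⊆ A; merge with p
        have hbqB : b * q ∈ B := mul_mem hb hqB
        have hbqA : b * q ∈ A := hYA _ hbqB hbq
        set c := (b * q) * p with hc
        have hcA : c ∈ A := mul_mem hbqA hpA
        have hval2 : b • δ = c • δ' := by rw [hval, smul_smul]
        by_cases hcY : c ∈ Y
        · -- c ∈ A ⊓ Y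
          have hcB : c ∈ B := hYB _ hcA hcY
          match k with
          | 0 =>
            have hδ'γ : δ' = γ := by rw [hδ', nfold_zero]
            refine ⟨0, by simp, fun i => 1, fun i => 1, ?_⟩
            refine ⟨fun i hi => absurd i.isLt (by omega), fun i hi => Or.inr rfl,
                    fun i hi => absurd i.isLt (by omega), fun i hi => Or.inr rfl, ?_⟩
            rw [nfold_zero, hval2, hδ'γ, hγc c hcA hcY]
          | k' + 1 =>
            have htrunc := hNF.trunc
            rw [← hδ'] at htrunc
            obtain ⟨m', hm', g'', h'', hNF'⟩ :=
              IH (k' + 1) (by omega) (fun i : Fin (k'+1) => g' i.castSucc)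
                (fun i => h' i.castSucc) δ' c hcB htrunc
            exact ⟨m', by omega, g'', h'', hval2 ▸ hNF'⟩
        · -- replace last pair by (c, 1)
          refine ⟨k + 1, by omega, Function.update g' (Fin.last k) c,
            Function.update h' (Fin.last k) 1, ?_⟩
          obtain ⟨h1, h2, h3, h4, -⟩ := hNF
          have hne : ∀ i : Fin (k+1), (i : ℕ) < k → i ≠ Fin.last k := by
            intro i hi hcontra; rw [hcontra] at hi; simp at hi
          refine ⟨?_, ?_, ?_, ?_, ?_⟩
          · intro i hi
            by_cases hil : i = Fin.last k
            · subst hil; simp [hcA, hcY]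
            · rw [Function.update_of_ne hil]; exact h1 i hi
          · intro i hi
            by_cases hil : i = Fin.last k
            · subst hil; simp [hcA, hcY]
            · rw [Function.update_of_ne hil]; exact h2 i hi
          · intro i hi
            have : i ≠ Fin.last k := hne i (by omega)
            rw [Function.update_of_ne this]; exact h3 i hi
          · intro i hi
            have hil : i = Fin.last k := by
              apply Fin.ext; simpa using hi
            subst hil; simp
          · rw [nfold_succ]
            have htrg : (fun i : Fin k => Function.update g' (Fin.last k) c i.castSucc)
                = fun i : Fin k => g' i.castSucc := by
              funext i; rw [Function.update_of_ne (Fin.castSucc_lt_last i).ne]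
            have htrh : (fun i : Fin k => Function.update h' (Fin.last k) 1 i.castSucc)
                = fun i : Fin k => h' i.castSucc := by
              funext i; rw [Function.update_of_ne (Fin.castSucc_lt_last i).ne]
            simp only [Function.update_self, one_smul]
            rw [htrg, htrh, hval2, hδ']
      · -- replace last h by b*q
        refine ⟨k + 1, by omega, g', Function.update h' (Fin.last k) (b * q), ?_⟩
        obtain ⟨h1, h2, h3, h4, -⟩ := hNF
        refine ⟨h1, h2, ?_, ?_, ?_⟩
        · intro i hi
          have : i ≠ Fin.last k := by
            intro hcontra; rw [hcontra] at hi; simp at hi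
          rw [Function.update_of_ne this]; exact h3 i hi
        · intro i hi
          have hil : i = Fin.last k := by apply Fin.ext; simpa using hi
          subst hil
          simp only [Function.update_self]
          exact Or.inl ⟨mul_mem hb hqB, hbq⟩
        · rw [nfold_succ]
          simp only [Function.update_self]
          have htr : (fun i : Fin k => Function.update h' (Fin.last k) (b*q) i.castSucc)
              = fun i : Fin k => h' i.castSucc := by
            funext i
            rw [Function.update_of_ne (Fin.castSucc_lt_last i).ne]
          rw [htr, hval, ← hδ']


private lemma mulA (A B Y : Subgroup G) (γ : Ω)
    (hYA : ∀ g, g ∈ B → g ∈ Y → g ∈ A)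
    (hYB : ∀ g, g ∈ A → g ∈ Y → g ∈ B)
    (hγc : ∀ g, g ∈ A → g ∈ Y → g • γ = γ) :
    ∀ m : ℕ, ∀ (g' h' : Fin m → G) (δ : Ω) (a : G), a ∈ A →
      NF A B Y γ g' h' δ →
      ∃ m', m' ≤ m + 1 ∧ ∃ g'' h'' : Fin m' → G, NF A B Y γ g'' h'' (a • δ) := by
  intro m g' h' δ a ha hNF
  by_cases haY : a ∈ Y
  · obtain ⟨m', hm', w⟩ := mulB A B Y γ hYA hYB hγc m g' h' δ a (hYB a ha haY) hNF
    exact ⟨m', hm'.trans (max_le (Nat.le_succ m) (by omega)), w⟩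
  · match m with
    | 0 =>
      have hδ : δ = γ := by
        obtain ⟨-, -, -, -, h5⟩ := hNF
        rw [← h5, nfold_zero]
      refine ⟨1, by omega, fun _ => a, fun _ => 1, ?_⟩
      refine ⟨fun i hi => absurd hi (by omega), fun i _ => Or.inl ⟨ha, haY⟩,
              fun i hi => absurd hi (by omega), fun i _ => Or.inr rfl, ?_⟩
      rw [hδ]
      simp [nfold]
    | k + 1 =>
      set p := g' (Fin.last k) with hp
      set q := h' (Fin.last k) with hq
      set δ' := nfold γ (fun i : Fin k => g' i.castSucc) (fun i => h' i.castSucc) with hδ'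
      have hpA : p ∈ A := hNF.last_g
      have hδeq : δ = q • (p • δ') := by
        obtain ⟨-, -, -, -, h5⟩ := hNF
        rw [← h5, nfold_succ]
      by_cases hq1 : q = 1
      · set c := a * p with hc
        have hcA : c ∈ A := mul_mem ha hpA
        have hval2 : a • δ = c • δ' := by
          rw [hδeq, hq1, one_smul, smul_smul]
        by_cases hcY : c ∈ Y
        · have hcB : c ∈ B := hYB _ hcA hcY
          match k with
          | 0 =>
            have hδ'γ : δ' = γ := by rw [hδ', nfold_zero]
            refine ⟨0, by omega, fun i => 1, fun i => 1, ?_⟩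
            refine ⟨fun i hi => absurd i.isLt (by omega), fun i hi => Or.inr rfl,
                    fun i hi => absurd i.isLt (by omega), fun i hi => Or.inr rfl, ?_⟩
            rw [nfold_zero, hval2, hδ'γ, hγc c hcA hcY]
          | k' + 1 =>
            have htrunc := hNF.trunc
            rw [← hδ'] at htrunc
            obtain ⟨m', hm', g'', h'', hNF'⟩ :=
              mulB A B Y γ hYA hYB hγc (k' + 1) (fun i : Fin (k'+1) => g' i.castSucc)
                (fun i => h' i.castSucc) δ' c hcB htrunc
            refine ⟨m', ?_, g'', h'', hval2 ▸ hNF'⟩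
            have : k' + 1 ⊔ 1 = k' + 1 := by omega
            omega
        · refine ⟨k + 1, by omega, Function.update g' (Fin.last k) c,
            Function.update h' (Fin.last k) 1, ?_⟩
          obtain ⟨h1, h2, h3, h4, -⟩ := hNF
          refine ⟨?_, ?_, ?_, ?_, ?_⟩
          · intro i hi
            by_cases hil : i = Fin.last k
            · subst hil; simp [hcA, hcY]
            · rw [Function.update_of_ne hil]; exact h1 i hi
          · intro i hi
            by_cases hil : i = Fin.last k
            · subst hil; simp [hcA, hcY]
            · rw [Function.update_of_ne hil]; exact h2 i hi
          · intro i hi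
            have : i ≠ Fin.last k := by
              intro hcontra; rw [hcontra] at hi; simp at hi
            rw [Function.update_of_ne this]; exact h3 i hi
          · intro i hi
            have hil : i = Fin.last k := by apply Fin.ext; simpa using hi
            subst hil; simp
          · rw [nfold_succ]
            have htrg : (fun i : Fin k => Function.update g' (Fin.last k) c i.castSucc)
                = fun i : Fin k => g' i.castSucc := by
              funext i; rw [Function.update_of_ne (Fin.castSucc_lt_last i).ne]
            have htrh : (fun i : Fin k => Function.update h' (Fin.last k) 1 i.castSucc)
                = fun i : Fin k => h' i.castSucc := by
              funext i; rw [Function.update_of_ne (Fin.castSucc_lt_last i).ne]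
            simp only [Function.update_self, one_smul]
            rw [htrg, htrh, hval2, hδ']
      · -- q ∈ B \ Y, append a new pair (a, 1)
        obtain ⟨h1, h2, h3, h4, h5⟩ := hNF
        have hqBY : q ∈ B ∧ q ∉ Y := by
          rcases h4 (Fin.last k) (by simp) with hh | hh
          · exact hh
          · exact absurd hh hq1
        refine ⟨k + 2, by omega, Fin.snoc g' a, Fin.snoc h' 1, ?_⟩
        refine ⟨?_, ?_, ?_, ?_, ?_⟩
        · intro i
          refine Fin.lastCases ?_ (fun j => ?_) i
          · intro _; simpa using ⟨ha, haY⟩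
          · intro hj
            rw [Fin.snoc_castSucc]
            exact h1 j (by simpa using hj)
        · intro i
          refine Fin.lastCases ?_ (fun j => ?_) i
          · intro hcontra; simp at hcontra
          · intro hj
            rw [Fin.snoc_castSucc]
            exact h2 j (by simpa using hj)
        · intro i
          refine Fin.lastCases ?_ (fun j => ?_) i
          · intro hcontra; simp at hcontra
          · intro hj
            rw [Fin.snoc_castSucc]
            rcases Nat.lt_or_ge (j : ℕ) k with hjk | hjk
            · exact h3 j (by omega)
            · have : j = Fin.last k := by
                apply Fin.ext; simp; omega
              rw [this]
              exact hqBY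
        · intro i
          refine Fin.lastCases ?_ (fun j => ?_) i
          · intro _; rw [Fin.snoc_last]; exact Or.inr rfl
          · intro hj
            have := j.isLt
            simp at hj
            omega
        · rw [nfold_succ]
          simp only [Fin.snoc_last, Fin.snoc_castSucc, one_smul]
          rw [h5]

private lemma mainNF (A B Y : Subgroup G) (γ : Ω)
    (hYA : ∀ g, g ∈ B → g ∈ Y → g ∈ A)
    (hYB : ∀ g, g ∈ A → g ∈ Y → g ∈ B)
    (hγc : ∀ g, g ∈ A → g ∈ Y → g • γ = γ) :
    ∀ n : ℕ, ∀ (g h : Fin n → G), (∀ i, g i ∈ A) → (∀ i, h i ∈ B) →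
      ∃ m, m ≤ n ∧ ∃ g' h' : Fin m → G, NF A B Y γ g' h' (nfold γ g h) := by
  intro n
  induction n with
  | zero =>
    intro g h _ _
    exact ⟨0, le_refl 0, g, h, fun i _ => absurd i.isLt (by omega),
      fun i _ => absurd i.isLt (by omega), fun i _ => absurd i.isLt (by omega),
      fun i _ => absurd i.isLt (by omega), rfl⟩
  | succ k IHn =>
    intro g h hg hh
    obtain ⟨m, hm, g', h', hNF⟩ := IHn (fun i => g i.castSucc) (fun i => h i.castSucc)
      (fun i => hg _) (fun i => hh _)
    obtain ⟨m1, hm1, g1, h1, hNF1⟩ := mulA A B Y γ hYA hYB hγc m g' h' _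
      (g (Fin.last k)) (hg _) hNF
    obtain ⟨m2, hm2, g2, h2, hNF2⟩ := mulB A B Y γ hYA hYB hγc m1 g1 h1 _
      (h (Fin.last k)) (hh _) hNF1
    refine ⟨m2, ?_, g2, h2, ?_⟩
    · have : m1 ⊔ 1 ≤ k + 1 := by
        apply max_le <;> omega
      omega
    · rw [nfold_succ]
      exact hNF2

end Stmt5Aux

/-- The normal-form lemma for products of elements of `G_α` and `G_β`
acting on `γ`, when `G_{α,y} = G_{β,y} ≤ G_γ`. Products act on the right:
`γ^{g₁h₁⋯gₙhₙ}` is the fold applying `g₁` first. -/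
theorem stmt5 {G Ω W : Type*} [Group G] [MulAction G Ω] [MulAction G W]
    (T : SimpleGraph W) (hT : T.IsTree)
    (hact : ∀ (g : G) (a b : W), T.Adj a b → T.Adj (g • a) (g • b))
    (α β γ : Ω) (y : W) (hαβ : α ≠ β)
    (hstab : MulAction.stabilizer G α ⊓ MulAction.stabilizer G y
           = MulAction.stabilizer G β ⊓ MulAction.stabilizer G y)
    (hγ : MulAction.stabilizer G α ⊓ MulAction.stabilizer G y ≤ MulAction.stabilizer G γ)
    (n : ℕ) (g h : Fin n → G)
    (hg : ∀ i, g i ∈ MulAction.stabilizer G α)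
    (hh : ∀ i, h i ∈ MulAction.stabilizer G β) :
    ∃ (m : ℕ) (_ : m ≤ n) (g' h' : Fin m → G),
      (∀ i : Fin m, 0 < (i : ℕ) →
        g' i ∈ MulAction.stabilizer G α ∧ g' i ∉ MulAction.stabilizer G y) ∧
      (∀ i : Fin m, (i : ℕ) = 0 →
        (g' i ∈ MulAction.stabilizer G α ∧ g' i ∉ MulAction.stabilizer G y) ∨ g' i = 1) ∧
      (∀ i : Fin m, (i : ℕ) < m - 1 →
        h' i ∈ MulAction.stabilizer G β ∧ h' i ∉ MulAction.stabilizer G y) ∧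
      (∀ i : Fin m, (i : ℕ) = m - 1 →
        (h' i ∈ MulAction.stabilizer G β ∧ h' i ∉ MulAction.stabilizer G y) ∨ h' i = 1) ∧
      (List.ofFn fun i => (g' i, h' i)).foldl (fun (x : Ω) p => p.2 • (p.1 • x)) γ
        = (List.ofFn fun i => (g i, h i)).foldl (fun (x : Ω) p => p.2 • (p.1 • x)) γ := by
  classical
  set A := MulAction.stabilizer G α with hA
  set B := MulAction.stabilizer G β with hB
  set Y := MulAction.stabilizer G y with hY
  have hYA : ∀ k : G, k ∈ B → k ∈ Y → k ∈ A := by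
    intro k hk hky
    have : k ∈ A ⊓ Y := by rw [hstab]; exact Subgroup.mem_inf.mpr ⟨hk, hky⟩
    exact (Subgroup.mem_inf.mp this).1
  have hYB : ∀ k : G, k ∈ A → k ∈ Y → k ∈ B := by
    intro k hk hky
    have : k ∈ B ⊓ Y := by rw [← hstab]; exact Subgroup.mem_inf.mpr ⟨hk, hky⟩
    exact (Subgroup.mem_inf.mp this).1
  have hγc : ∀ k : G, k ∈ A → k ∈ Y → k • γ = γ := by
    intro k hk hky
    exact hγ (Subgroup.mem_inf.mpr ⟨hk, hky⟩)
  obtain ⟨m, hm, g', h', c1, c2, c3, c4, c5⟩ :=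
    mainNF A B Y γ hYA hYB hγc n g h hg hh
  exact ⟨m, hm, g', h', c1, c2, c3, c4, c5⟩
end

section
/- Let G be a vertex- and edge-transitive group of automorphisms of a primitive connectivity-one graph Γ whose blocks have at least three vertices. If Λ is a block of Γ and H is the permutation group induced on VΛ by the setwise stabiliser G_{{Λ}}, then H acts primitively on VΛ. -/
open Pointwise

section Aux

open SimpleGraph

variable {V : Type*} {Γ : SimpleGraph V}

lemma st8_reach_mono {S T : Set V} (hST : S ⊆ T) {a b : V} (ha : a ∈ S) (hb : b ∈ S)
    (h : (Γ.induce S).Reachable ⟨a, ha⟩ ⟨b, hb⟩) :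
    (Γ.induce T).Reachable ⟨a, hST ha⟩ ⟨b, hST hb⟩ := by
  exact h.map (Γ.induceHomOfLE hST).toHom

lemma st8_reach_of_walk {S : Set V} : ∀ {a b : V} (W : Γ.Walk a b),
    (∀ x ∈ W.support, x ∈ S) → ∀ (ha : a ∈ S) (hb : b ∈ S),
    (Γ.induce S).Reachable ⟨a, ha⟩ ⟨b, hb⟩ := by
  intro a b W
  induction W with
  | nil => intro _ _ _; exact Reachable.refl _
  | @cons a c b had W ih =>
    intro hS ha hb
    have hc : c ∈ S := hS c (by simp)
    have h1 : (Γ.induce S).Adj ⟨a, ha⟩ ⟨c, hc⟩ := had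
    exact h1.reachable.trans (ih (fun x hx => hS x (by simp [hx])) hc hb)

lemma st8_precon_union {S T : Set V} (hS : (Γ.induce S).Preconnected)
    (hT : (Γ.induce T).Preconnected) (hM : (S ∩ T).Nonempty) :
    (Γ.induce (S ∪ T)).Preconnected := by
  obtain ⟨w, hwS, hwT⟩ := hM
  have key : ∀ z : (S ∪ T : Set V), (Γ.induce (S ∪ T)).Reachable z ⟨w, Or.inl hwS⟩ := by
    rintro ⟨z, hz | hz⟩
    · exact st8_reach_mono Set.subset_union_left hz hwS (hS ⟨z, hz⟩ ⟨w, hwS⟩)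
    · exact st8_reach_mono Set.subset_union_right hz hwT (hT ⟨z, hz⟩ ⟨w, hwT⟩)
  intro u v
  exact (key u).trans (key v).symm

lemma st8_precon_del {B : Set V} (hB : IsBlockOf Γ B) (v : V) :
    (Γ.induce (B \ {v})).Preconnected := by
  by_cases hv : v ∈ B
  · exact hB.2.1 v hv
  · rw [Set.diff_singleton_eq_self hv]
    exact hB.1.preconnected

lemma st8_block_eq_of_two {B C : Set V} (hB : IsBlockOf Γ B) (hC : IsBlockOf Γ C)
    {x y : V} (hxB : x ∈ B) (hxC : x ∈ C) (hyB : y ∈ B) (hyC : y ∈ C) (hxy : x ≠ y) :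
    B = C := by
  have hconn : (Γ.induce (B ∪ C)).Connected := by
    rw [SimpleGraph.connected_iff]
    exact ⟨st8_precon_union hB.1.preconnected hC.1.preconnected ⟨x, hxB, hxC⟩,
      ⟨⟨x, Or.inl hxB⟩⟩⟩
  have hdel : ∀ v ∈ B ∪ C, (Γ.induce ((B ∪ C) \ {v})).Preconnected := by
    intro v _
    have hsets : (B ∪ C) \ {v} = (B \ {v}) ∪ (C \ {v}) := Set.union_diff_distrib
    rw [hsets]
    refine st8_precon_union (st8_precon_del hB v) (st8_precon_del hC v) ?_
    rcases eq_or_ne x v with rfl | hxv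
    · exact ⟨y, ⟨hyB, by simpa using (Ne.symm hxy)⟩, ⟨hyC, by simpa using (Ne.symm hxy)⟩⟩
    · exact ⟨x, ⟨hxB, by simpa using hxv⟩, ⟨hxC, by simpa using hxv⟩⟩
  have h1 : B = B ∪ C := hB.2.2 _ Set.subset_union_left hconn hdel
  have h2 : C = B ∪ C := hC.2.2 _ Set.subset_union_right hconn hdel
  exact h1.trans h2.symm




def st8_permIsoInduce (e : Equiv.Perm V) (hp : ∀ a b, Γ.Adj (e a) (e b) ↔ Γ.Adj a b)
    (S : Set V) : Γ.induce S ≃g Γ.induce (⇑e '' S) where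
  toEquiv := e.image S
  map_rel_iff' := by
    rintro ⟨a, ha⟩ ⟨b, hb⟩
    simpa using hp a b


lemma st8_block_image (e : Equiv.Perm V) (hp : ∀ a b, Γ.Adj (e a) (e b) ↔ Γ.Adj a b)
    {B : Set V} (hB : IsBlockOf Γ B) : IsBlockOf Γ (⇑e '' B) := by
  have hp' : ∀ a b, Γ.Adj (e.symm a) (e.symm b) ↔ Γ.Adj a b := by
    intro a b
    rw [← hp (e.symm a) (e.symm b)]
    simp
  refine ⟨?_, ?_, ?_⟩
  · exact ((st8_permIsoInduce e hp B).connected_iff).1 hB.1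
  · rintro b ⟨b0, hb0, rfl⟩
    have hset : (⇑e '' B) \ {e b0} = ⇑e '' (B \ {b0}) := by
      rw [Set.image_diff e.injective, Set.image_singleton]
    rw [hset]
    exact ((st8_permIsoInduce e hp (B \ {b0})).preconnected_iff).1 (hB.2.1 b0 hb0)
  · intro C hsub hC hdel
    have h1 : B ⊆ ⇑e.symm '' C := by
      intro x hx
      exact ⟨e x, hsub ⟨x, hx, rfl⟩, by simp⟩
    have h2 : (Γ.induce (⇑e.symm '' C)).Connected :=
      ((st8_permIsoInduce e.symm hp' C).connected_iff).1 hC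
    have h3 : ∀ c ∈ ⇑e.symm '' C, (Γ.induce ((⇑e.symm '' C) \ {c})).Preconnected := by
      rintro c ⟨c0, hc0, rfl⟩
      have hset : (⇑e.symm '' C) \ {e.symm c0} = ⇑e.symm '' (C \ {c0}) := by
        rw [Set.image_diff e.symm.injective, Set.image_singleton]
      rw [hset]
      exact ((st8_permIsoInduce e.symm hp' (C \ {c0})).preconnected_iff).1 (hdel c0 hc0)
    have h4 := hB.2.2 _ h1 h2 h3
    rw [h4]
    simp

lemma st8_exists_path2 {W : Type*} {Δ : SimpleGraph W} (hc : Δ.Preconnected)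
    (x y z : W) (hxy : x ≠ y) (hxz : x ≠ z) (hyz : y ≠ z) :
    ∃ a b c : W, Δ.Adj a b ∧ Δ.Adj b c ∧ a ≠ c := by
  by_contra hcon
  push_neg at hcon
  obtain ⟨Wxy⟩ := hc x y
  obtain ⟨u, hxu⟩ : ∃ u, Δ.Adj x u := by
    cases Wxy with
    | nil => exact absurd rfl hxy
    | cons h' _ => exact ⟨_, h'⟩
  have key : ∀ {s tt : W}, Δ.Walk s tt → s = x ∨ s = u → tt = x ∨ tt = u := by
    intro s tt Wst
    induction Wst with
    | nil => exact id
    | @cons s s' tt hss' _ ih =>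
      intro hs
      apply ih
      rcases hs with rfl | rfl
      · exact Or.inr (hcon u s s' hxu.symm hss').symm
      · exact Or.inl (hcon x s s' hxu hss').symm
  rcases eq_or_ne y u with rfl | hyu
  · obtain ⟨Wxz⟩ := hc x z
    rcases key Wxz (Or.inl rfl) with h' | h'
    · exact hxz h'.symm
    · exact hyz h'.symm
  · obtain ⟨Wxy2⟩ := hc x y
    rcases key Wxy2 (Or.inl rfl) with h' | h'
    · exact hxy h'.symm
    · exact hyu h'

lemma st8_walk_to_gate {Λ : Set V} : ∀ {v w : V} (_W : Γ.Walk v w), w ∈ Λ →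
    ∃ c, c ∈ Λ ∧ ∃ W' : Γ.Walk v c, ∀ x ∈ W'.support, x ∈ Λ → x = c := by
  intro v w W
  induction W with
  | @nil c =>
    intro hv
    exact ⟨c, hv, Walk.nil, by intro x hx _; simpa using hx⟩
  | @cons v c w hadj W ih =>
    intro hw
    by_cases hv : v ∈ Λ
    · exact ⟨v, hv, Walk.nil, by intro x hx _; simpa using hx⟩
    · obtain ⟨c', hc', W', hW'⟩ := ih hw
      refine ⟨c', hc', Walk.cons hadj W', ?_⟩
      intro x hx hxΛ
      rcases (by simpa using hx : x = v ∨ x ∈ W'.support) with rfl | hx'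
      · exact absurd hxΛ hv
      · exact hW' x hx' hxΛ

lemma st8_path_avoid : ∀ {a b : V} (P : Γ.Walk a b), P.IsPath → ∀ x u, u ∈ P.support → u ≠ x →
    (∃ W : Γ.Walk u b, (∀ y ∈ W.support, y ∈ P.support) ∧ x ∉ W.support) ∨
    (∃ W : Γ.Walk u a, (∀ y ∈ W.support, y ∈ P.support) ∧ x ∉ W.support) := by
  classical
  intro a b P
  induction P with
  | @nil c =>
    intro _ x u hu hux
    have hc : u = c := by simpa using hu
    subst hc
    exact Or.inl ⟨Walk.nil, by simp, by simpa using Ne.symm hux⟩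
  | @cons a a' b hadj q ih =>
    intro hP x u hu hux
    have hqp : q.IsPath := ((Walk.cons_isPath_iff _ _).mp hP).1
    have haq : a ∉ q.support := ((Walk.cons_isPath_iff _ _).mp hP).2
    rcases (by simpa using hu : u = a ∨ u ∈ q.support) with rfl | huq
    · exact Or.inr ⟨Walk.nil, by simp, by simpa using Ne.symm hux⟩
    · by_cases hxa : x = a
      · subst hxa
        refine Or.inl ⟨q.dropUntil u huq, ?_, ?_⟩
        · intro y hy
          simp only [Walk.support_cons, List.mem_cons]
          exact Or.inr (q.support_dropUntil_subset huq hy)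
        · exact fun hxW => haq (q.support_dropUntil_subset huq hxW)
      · by_cases hxq : x ∈ q.support
        · rcases ih hqp x u huq hux with ⟨W, hWs, hWx⟩ | ⟨W, hWs, hWx⟩
          · refine Or.inl ⟨W, ?_, hWx⟩
            intro y hy
            simp only [Walk.support_cons, List.mem_cons]
            exact Or.inr (hWs y hy)
          · refine Or.inr ⟨W.append (Walk.cons hadj.symm Walk.nil), ?_, ?_⟩
            · intro y hy
              rcases (Walk.mem_support_append_iff _ _).mp hy with hy | hy
              · simp only [Walk.support_cons, List.mem_cons]
                exact Or.inr (hWs y hy)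
              · rcases (by simpa using hy : y = a' ∨ y = a) with rfl | rfl
                · simp only [Walk.support_cons, List.mem_cons]
                  exact Or.inr q.start_mem_support
                · simp [Walk.support_cons]
            · intro hxW
              rcases (Walk.mem_support_append_iff _ _).mp hxW with hy | hy
              · exact hWx hy
              · rcases (by simpa using hy : x = a' ∨ x = a) with rfl | rfl
                · exact hWx W.end_mem_support
                · exact hxa rfl
        · refine Or.inl ⟨(Walk.cons hadj q).dropUntil u hu, ?_, ?_⟩
          · exact fun y hy => Walk.support_dropUntil_subset _ hu hy
          · intro hxW
            have hx : x ∈ (Walk.cons hadj q).support := Walk.support_dropUntil_subset _ hu hxW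
            rcases (by simpa using hx : x = a ∨ x ∈ q.support) with rfl | h
            · exact hxa rfl
            · exact hxq h



lemma st8_gate_unique {Λ : Set V} (hΛ : IsBlockOf Γ Λ) :
    ∀ n : ℕ, ∀ (v c1 c2 : V) (W1 : Γ.Walk v c1) (W2 : Γ.Walk v c2),
      W1.length + W2.length ≤ n → c1 ∈ Λ → c2 ∈ Λ →
      (∀ x ∈ W1.support, x ∈ Λ → x = c1) → (∀ x ∈ W2.support, x ∈ Λ → x = c2) →
      c1 = c2 := by
  classical
  intro n
  induction n using Nat.strong_induction_on with
  | _ n IH =>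
  intro v c1 c2 W1 W2 hlen hc1 hc2 hW1sup hW2sup
  by_cases hceq : c1 = c2
  · exact hceq
  exfalso
  set P1 := W1.bypass with hP1def
  set P2 := W2.bypass with hP2def
  have hP1p : P1.IsPath := W1.bypass_isPath
  have hP2p : P2.IsPath := W2.bypass_isPath
  have hP1s : ∀ x ∈ P1.support, x ∈ Λ → x = c1 := fun x hx => hW1sup x (W1.support_bypass_subset hx)
  have hP2s : ∀ x ∈ P2.support, x ∈ Λ → x = c2 := fun x hx => hW2sup x (W2.support_bypass_subset hx)
  have hlen' : P1.length + P2.length ≤ n :=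
    le_trans (Nat.add_le_add W1.length_bypass_le W2.length_bypass_le) hlen
  by_cases hv : v ∈ Λ
  · exact hceq ((hP1s v P1.start_mem_support hv).symm.trans (hP2s v P2.start_mem_support hv))
  by_cases hshare : ∃ u, u ≠ v ∧ u ∈ P1.support ∧ u ∈ P2.support
  · obtain ⟨u, huv, hu1, hu2⟩ := hshare
    by_cases huΛ : u ∈ Λ
    · exact hceq ((hP1s u hu1 huΛ).symm.trans (hP2s u hu2 huΛ))
    · have hspec1 : (P1.takeUntil u hu1).length + (P1.dropUntil u hu1).length = P1.length := by
        have h := congrArg Walk.length (P1.take_spec hu1)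
        rwa [Walk.length_append] at h
      have hspec2 : (P2.takeUntil u hu2).length + (P2.dropUntil u hu2).length = P2.length := by
        have h := congrArg Walk.length (P2.take_spec hu2)
        rwa [Walk.length_append] at h
      have ht1 : 1 ≤ (P1.takeUntil u hu1).length := by
        by_contra h
        push_neg at h
        exact huv (Walk.eq_of_length_eq_zero (Nat.lt_one_iff.mp h)).symm
      have ht2 : 1 ≤ (P2.takeUntil u hu2).length := by
        by_contra h
        push_neg at h
        exact huv (Walk.eq_of_length_eq_zero (Nat.lt_one_iff.mp h)).symm
      have hlt : (P1.dropUntil u hu1).length + (P2.dropUntil u hu2).length < n := by omega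
      exact hceq (IH _ hlt u c1 c2 (P1.dropUntil u hu1) (P2.dropUntil u hu2) le_rfl hc1 hc2
        (fun x hx => hP1s x (Walk.support_dropUntil_subset _ hu1 hx))
        (fun x hx => hP2s x (Walk.support_dropUntil_subset _ hu2 hx)))
  push_neg at hshare
  set C : Set V := Λ ∪ ({y | y ∈ P1.support} ∪ {y | y ∈ P2.support}) with hCdef
  have hΛC : Λ ⊆ C := Set.subset_union_left
  have hP1C : ∀ y ∈ P1.support, y ∈ C := fun y hy => Or.inr (Or.inl hy)
  have hP2C : ∀ y ∈ P2.support, y ∈ C := fun y hy => Or.inr (Or.inr hy)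
  have hc1C : c1 ∈ C := hΛC hc1
  have base : ∀ z (hz : z ∈ C), (Γ.induce C).Reachable ⟨z, hz⟩ ⟨c1, hc1C⟩ := by
    intro z hz
    rcases hz with hzΛ | hz1 | hz2
    · exact st8_reach_mono hΛC hzΛ hc1 (hΛ.1.preconnected ⟨z, hzΛ⟩ ⟨c1, hc1⟩)
    · exact st8_reach_of_walk (P1.dropUntil z hz1)
        (fun x hx => hP1C x (Walk.support_dropUntil_subset _ hz1 hx)) (hP1C z hz1) hc1C
    · exact (st8_reach_of_walk (P2.dropUntil z hz2)
        (fun x hx => hP2C x (Walk.support_dropUntil_subset _ hz2 hx)) (hP2C z hz2) (hΛC hc2)).trans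
        (st8_reach_mono hΛC hc2 hc1 (hΛ.1.preconnected ⟨c2, hc2⟩ ⟨c1, hc1⟩))
  have hCconn : (Γ.induce C).Connected := by
    rw [SimpleGraph.connected_iff]
    exact ⟨fun zu zv => (base zu.1 zu.2).trans (base zv.1 zv.2).symm, ⟨⟨c1, hc1C⟩⟩⟩
  have core : ∀ (x : V) (cA cB : V) (PA : Γ.Walk v cA) (PB : Γ.Walk v cB), PA.IsPath →
      cA ∈ Λ → cB ∈ Λ → (∀ y ∈ PA.support, y ∈ C) → (∀ y ∈ PB.support, y ∈ C) →
      (∀ y, y ≠ v → y ∈ PA.support → y ∉ PB.support) →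
      ∀ u, u ∈ PA.support → u ≠ x →
      ∃ w, ∃ (hu' : u ∈ C \ {x}) (hw' : w ∈ C \ {x}), w ∈ Λ ∧
        (Γ.induce (C \ {x})).Reachable ⟨u, hu'⟩ ⟨w, hw'⟩ := by
    intro x cA cB PA PB hPAp hcA hcB hPAC hPBC hdisj u huA hux
    have humem : u ∈ C \ {x} := ⟨hPAC u huA, by simpa using hux⟩
    rcases st8_path_avoid PA hPAp x u huA hux with ⟨W, hWs, hWx⟩ | ⟨W, hWs, hWx⟩
    · have hcAx : cA ≠ x := fun h => hWx (h ▸ W.end_mem_support)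
      refine ⟨cA, humem, ⟨hΛC hcA, by simpa using hcAx⟩, hcA, ?_⟩
      exact st8_reach_of_walk (S := C \ {x}) W
        (fun y hy => ⟨hPAC y (hWs y hy), by
          simp only [Set.mem_singleton_iff]; exact fun h => hWx (h ▸ hy)⟩)
        humem ⟨hΛC hcA, by simpa using hcAx⟩
    · have hvx : v ≠ x := fun h => hWx (h ▸ W.end_mem_support)
      by_cases hxB : x ∈ PB.support
      · have hxA : x ∉ PA.support := fun hxA => hdisj x (Ne.symm hvx) hxA hxB
        have hcAx : cA ≠ x := fun h => hxA (h ▸ PA.end_mem_support)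
        refine ⟨cA, humem, ⟨hΛC hcA, by simpa using hcAx⟩, hcA, ?_⟩
        exact st8_reach_of_walk (S := C \ {x}) (W.append PA)
          (fun y hy => by
            rcases (Walk.mem_support_append_iff _ _).mp hy with hy | hy
            · exact ⟨hPAC y (hWs y hy), by
                simp only [Set.mem_singleton_iff]; exact fun h => hWx (h ▸ hy)⟩
            · exact ⟨hPAC y hy, by
                simp only [Set.mem_singleton_iff]; exact fun h => hxA (h ▸ hy)⟩)
          humem ⟨hΛC hcA, by simpa using hcAx⟩
      · have hcBx : cB ≠ x := fun h => hxB (h ▸ PB.end_mem_support)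
        refine ⟨cB, humem, ⟨hΛC hcB, by simpa using hcBx⟩, hcB, ?_⟩
        exact st8_reach_of_walk (S := C \ {x}) (W.append PB)
          (fun y hy => by
            rcases (Walk.mem_support_append_iff _ _).mp hy with hy | hy
            · exact ⟨hPAC y (hWs y hy), by
                simp only [Set.mem_singleton_iff]; exact fun h => hWx (h ▸ hy)⟩
            · exact ⟨hPBC y hy, by
                simp only [Set.mem_singleton_iff]; exact fun h => hxB (h ▸ hy)⟩)
          humem ⟨hΛC hcB, by simpa using hcBx⟩
  have hdel : ∀ x ∈ C, (Γ.induce (C \ {x})).Preconnected := by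
    intro x _
    have mainreach : ∀ (u : V) (hu : u ∈ C \ {x}), ∃ w, ∃ (hw' : w ∈ C \ {x}), w ∈ Λ ∧
        (Γ.induce (C \ {x})).Reachable ⟨u, hu⟩ ⟨w, hw'⟩ := by
      intro u hu
      obtain ⟨huC, hux0⟩ := hu
      have hux : u ≠ x := by simpa using hux0
      rcases huC with huΛ | hu1 | hu2
      · exact ⟨u, ⟨Or.inl huΛ, hux0⟩, huΛ, Reachable.refl _⟩
      · obtain ⟨w, hu', hw', hwΛ, hr⟩ := core x c1 c2 P1 P2 hP1p hc1 hc2 hP1C hP2C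
          (fun y hyv hy1 => hshare y hyv hy1) u hu1 hux
        exact ⟨w, hw', hwΛ, hr⟩
      · obtain ⟨w, hu', hw', hwΛ, hr⟩ := core x c2 c1 P2 P1 hP2p hc2 hc1 hP2C hP1C
          (fun y hyv hy2 hy1 => hshare y hyv hy1 hy2) u hu2 hux
        exact ⟨w, hw', hwΛ, hr⟩
    rintro ⟨u1, hu1⟩ ⟨u2, hu2⟩
    obtain ⟨w1, hw1, hw1Λ, hr1⟩ := mainreach u1 hu1
    obtain ⟨w2, hw2, hw2Λ, hr2⟩ := mainreach u2 hu2
    have hΛsub : Λ \ {x} ⊆ C \ {x} := Set.diff_subset_diff_left hΛC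
    have hpre : (Γ.induce (Λ \ {x})).Preconnected := st8_precon_del hΛ x
    have hw1' : w1 ∈ Λ \ {x} := ⟨hw1Λ, hw1.2⟩
    have hw2' : w2 ∈ Λ \ {x} := ⟨hw2Λ, hw2.2⟩
    exact (hr1.trans (st8_reach_mono hΛsub hw1' hw2' (hpre ⟨w1, hw1'⟩ ⟨w2, hw2'⟩))).trans hr2.symm
  have hΛeq : Λ = C := hΛ.2.2 C hΛC hCconn hdel
  rw [hΛeq] at hv
  exact hv (hP1C v P1.start_mem_support)

end Aux


/-- If `G` is vertex- and edge-transitive and primitive on a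
connectivity-one graph whose blocks have at least three vertices, then the permutation
group induced on a block by its setwise stabiliser is primitive. -/
theorem stmt8 {V : Type*} (E : V → V → Prop) (G : Subgroup (Equiv.Perm V))
    (hGaut : ∀ g ∈ G, DPreserves E g)
    (hvt : ∀ a b : V, ∃ g ∈ G, g a = b)
    (hedget : ∀ a b c d : V, E a b → E c d → ∃ g ∈ G, g a = c ∧ g b = d)
    (hconn1 : HasConnOne (SimpleGraph.fromRel E))
    (hblocks3 : ∀ B : Set V, IsBlockOf (SimpleGraph.fromRel E) B → HasThreeVertices B)
    (hprim : IsPrimitiveSub G)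
    (Λ : Set V) (hΛ : IsBlockOf (SimpleGraph.fromRel E) Λ) :
    (∀ a b : V, a ∈ Λ → b ∈ Λ →
        ∃ g ∈ G, (g : Equiv.Perm V) '' Λ = Λ ∧ (g : Equiv.Perm V) a = b) ∧
    ∀ r : Setoid Λ,
      (∀ g ∈ G, (g : Equiv.Perm V) '' Λ = Λ →
        ∀ (a b : V) (ha : a ∈ Λ) (hb : b ∈ Λ) (hga : (g : Equiv.Perm V) a ∈ Λ)
          (hgb : (g : Equiv.Perm V) b ∈ Λ),
          (r.r ⟨a, ha⟩ ⟨b, hb⟩ ↔ r.r ⟨(g : Equiv.Perm V) a, hga⟩ ⟨(g : Equiv.Perm V) b, hgb⟩)) →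
      (∀ a b : Λ, r.r a b ↔ a = b) ∨ ∀ a b : Λ, r.r a b := by
  classical
  set Γ := SimpleGraph.fromRel E with hΓdef
  -- adjacency is preserved by elements of G
  have hGadj : ∀ g ∈ G, ∀ a b : V, Γ.Adj (g a) (g b) ↔ Γ.Adj a b := by
    intro g hg a b
    simp only [hΓdef, SimpleGraph.fromRel_adj]
    constructor
    · rintro ⟨hne, h⟩
      refine ⟨fun hh => hne (by rw [hh]), ?_⟩
      rwa [hGaut g hg a b, hGaut g hg b a] at h
    · rintro ⟨hne, h⟩
      refine ⟨fun hh => hne (g.injective hh), ?_⟩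
      rw [hGaut g hg a b, hGaut g hg b a]
      exact h
  -- if the image of Λ shares two points with Λ, it is Λ
  have stab2 : ∀ g ∈ G, ∀ s t : V, s ∈ Λ → t ∈ Λ → s ∈ ⇑g '' Λ →
      t ∈ ⇑g '' Λ → s ≠ t → ⇑g '' Λ = Λ := by
    intro g hg s t hs ht hs' ht' hst
    exact st8_block_eq_of_two (st8_block_image g (hGadj g hg) hΛ) hΛ hs' hs ht' ht hst
  -- a nontrivial element of G stabilising Λ
  obtain ⟨x0, y0, z0, hx0, hy0, hz0, hxy0, hxz0, hyz0⟩ := hblocks3 Λ hΛ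
  obtain ⟨⟨u, huΛ⟩, ⟨p, hpΛ⟩, ⟨w, hwΛ⟩, hadj1, hadj2, hne⟩ :=
    st8_exists_path2 (hΛ.1.preconnected) (⟨x0, hx0⟩ : Λ) ⟨y0, hy0⟩ ⟨z0, hz0⟩
      (fun h => hxy0 (congrArg Subtype.val h)) (fun h => hxz0 (congrArg Subtype.val h))
      (fun h => hyz0 (congrArg Subtype.val h))
  have hne' : u ≠ w := fun h => hne (Subtype.ext h)
  have hadj1' : Γ.Adj u p := hadj1
  have hadj2' : Γ.Adj p w := hadj2
  rw [hΓdef, SimpleGraph.fromRel_adj] at hadj1' hadj2'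
  obtain ⟨hup, h1⟩ := hadj1'
  obtain ⟨hpw, h2⟩ := hadj2'
  have moved : ∃ g ∈ G, ⇑g '' Λ = Λ ∧ ∃ q ∈ Λ, g q ≠ q := by
    rcases h1 with h1 | h1 <;> rcases h2 with h2 | h2
    · obtain ⟨g, hg, hg1, hg2⟩ := hedget u p p w h1 h2
      exact ⟨g, hg, stab2 g hg p w hpΛ hwΛ ⟨u, huΛ, hg1⟩ ⟨p, hpΛ, hg2⟩ hpw, u, huΛ,
        by rw [hg1]; exact Ne.symm hup⟩
    · obtain ⟨g, hg, hg1, hg2⟩ := hedget u p w p h1 h2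
      exact ⟨g, hg, stab2 g hg w p hwΛ hpΛ ⟨u, huΛ, hg1⟩ ⟨p, hpΛ, hg2⟩ (Ne.symm hpw), u, huΛ,
        by rw [hg1]; exact Ne.symm hne'⟩
    · obtain ⟨g, hg, hg1, hg2⟩ := hedget p u p w h1 h2
      exact ⟨g, hg, stab2 g hg p w hpΛ hwΛ ⟨p, hpΛ, hg1⟩ ⟨u, huΛ, hg2⟩ hpw, u, huΛ,
        by rw [hg2]; exact Ne.symm hne'⟩
    · obtain ⟨g, hg, hg1, hg2⟩ := hedget p u w p h1 h2
      exact ⟨g, hg, stab2 g hg w p hwΛ hpΛ ⟨p, hpΛ, hg1⟩ ⟨u, huΛ, hg2⟩ (Ne.symm hpw), p, hpΛ,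
        by rw [hg1]; exact Ne.symm hpw⟩
  -- gates
  have hpreΓ : Γ.Preconnected := hconn1.1.preconnected
  have gatesex : ∀ v : V, ∃ c, c ∈ Λ ∧ ∃ W : Γ.Walk v c, ∀ x ∈ W.support, x ∈ Λ → x = c := by
    intro v
    obtain ⟨W⟩ := hpreΓ v x0
    exact st8_walk_to_gate W hx0
  choose gate hgateΛ Wg hWg using gatesex
  have gate_eq : ∀ (v c : V), c ∈ Λ → ∀ (W : Γ.Walk v c), (∀ x ∈ W.support, x ∈ Λ → x = c) →
      c = gate v := fun v c hc W hW =>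
    st8_gate_unique hΛ (W.length + (Wg v).length) v c (gate v) W (Wg v) le_rfl hc (hgateΛ v)
      hW (hWg v)
  have gate_mem : ∀ (v : V), v ∈ Λ → gate v = v := fun v hv =>
    (hWg v v (Wg v).start_mem_support hv).symm
  -- the retraction is constant on blocks other than Λ
  have fconst : ∀ B : Set V, IsBlockOf Γ B → B ≠ Λ → ∀ x y : V, x ∈ B → y ∈ B →
      gate x = gate y := by
    intro B hB hBΛ x y hx hy
    obtain ⟨W0⟩ := hB.1.preconnected ⟨x, hx⟩ ⟨y, hy⟩
    let ι : Γ.induce B →g Γ := ⟨Subtype.val, fun {a b} h => h⟩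
    set W : Γ.Walk x y := W0.map ι with hWdef
    have hsub : ∀ z ∈ W.support, z ∈ B := by
      intro z hz
      rw [hWdef, SimpleGraph.Walk.support_map] at hz
      obtain ⟨⟨z', hz'⟩, _, rfl⟩ := List.mem_map.mp hz
      exact hz'
    by_cases hWΛ : ∃ z ∈ W.support, z ∈ Λ
    · obtain ⟨z, hzW, hzΛ⟩ := hWΛ
      have huniq : ∀ z' ∈ W.support, z' ∈ Λ → z' = z := by
        intro z' hz' hz'Λ
        by_contra hne2
        exact hBΛ (st8_block_eq_of_two hB hΛ (hsub z' hz') hz'Λ (hsub z hzW) hzΛ hne2)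
      have hh1 : z = gate x := gate_eq x z hzΛ (W.takeUntil z hzW)
        (fun s hs hsΛ => huniq s (SimpleGraph.Walk.support_takeUntil_subset _ hzW hs) hsΛ)
      have hh2 : z = gate y := gate_eq y z hzΛ (W.dropUntil z hzW).reverse
        (fun s hs hsΛ => huniq s (SimpleGraph.Walk.support_dropUntil_subset _ hzW (by
          rwa [SimpleGraph.Walk.support_reverse, List.mem_reverse] at hs)) hsΛ)
      rw [← hh1, ← hh2]
    · push_neg at hWΛ
      exact gate_eq y (gate x) (hgateΛ x) (W.reverse.append (Wg x)) (by
        intro s hs hsΛ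
        rcases (SimpleGraph.Walk.mem_support_append_iff _ _).mp hs with hs | hs
        · exact absurd hsΛ (hWΛ s (by
            rwa [SimpleGraph.Walk.support_reverse, List.mem_reverse] at hs))
        · exact hWg x s hs hsΛ)
  -- Part 2 : primitivity of the induced action
  have main2 : ∀ r : Setoid Λ,
      (∀ g ∈ G, (g : Equiv.Perm V) '' Λ = Λ →
        ∀ (a b : V) (ha : a ∈ Λ) (hb : b ∈ Λ) (hga : (g : Equiv.Perm V) a ∈ Λ)
          (hgb : (g : Equiv.Perm V) b ∈ Λ),
          (r.r ⟨a, ha⟩ ⟨b, hb⟩ ↔ r.r ⟨(g : Equiv.Perm V) a, hga⟩ ⟨(g : Equiv.Perm V) b, hgb⟩)) →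
      (∀ a b : Λ, r.r a b ↔ a = b) ∨ ∀ a b : Λ, r.r a b := by
    intro r hinv
    have rcongr : ∀ {u1 v1 u2 v2 : Λ}, (u1 : V) = u2 → (v1 : V) = v2 →
        r.r u1 v1 → r.r u2 v2 := by
      intro u1 v1 u2 v2 e1 e2 hr
      rwa [Subtype.ext e1, Subtype.ext e2] at hr
    set t : V → V → Prop := fun a b => ∃ g ∈ G, ∃ (ha : g a ∈ Λ) (hb : g b ∈ Λ),
      r.r ⟨g a, ha⟩ ⟨g b, hb⟩ with htdef
    have tinv : ∀ h ∈ G, ∀ a b, t a b → t (h a) (h b) := by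
      rintro h hh a b ⟨g, hg, ha, hb, hr⟩
      have e1 : (g * h⁻¹) (h a) = g a := by simp
      have e2 : (g * h⁻¹) (h b) = g b := by simp
      exact ⟨g * h⁻¹, mul_mem hg (inv_mem hh), e1.symm ▸ ha, e2.symm ▸ hb,
        rcongr e1.symm e2.symm hr⟩
    have tdir : ∀ h ∈ G, ∀ a b, Relation.EqvGen t a b → Relation.EqvGen t (h a) (h b) := by
      intro h hh a b hab
      induction hab with
      | rel p q hpq => exact Relation.EqvGen.rel _ _ (tinv h hh p q hpq)
      | refl p => exact Relation.EqvGen.refl _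
      | symm p q _ ih => exact Relation.EqvGen.symm _ _ ih
      | trans p q s _ _ ih1 ih2 => exact Relation.EqvGen.trans _ _ _ ih1 ih2
    have hsinv : ∀ h ∈ G, ∀ a b : V, Relation.EqvGen t a b ↔ Relation.EqvGen t (h a) (h b) := by
      intro h hh a b
      refine ⟨tdir h hh a b, fun hab => ?_⟩
      have hres := tdir h⁻¹ (inv_mem hh) _ _ hab
      simpa using hres
    rcases hprim.2 (Relation.EqvGen.setoid t) hsinv with htriv | huniv
    · left
      intro a b
      constructor
      · intro hr
        have hm1 : (1 : Equiv.Perm V) (a : V) ∈ Λ := a.2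
        have hm2 : (1 : Equiv.Perm V) (b : V) ∈ Λ := b.2
        have ht1 : t a.1 b.1 := ⟨1, one_mem G, hm1, hm2, rcongr rfl rfl hr⟩
        exact Subtype.ext ((htriv a.1 b.1).mp (Relation.EqvGen.rel _ _ ht1))
      · rintro rfl
        exact r.iseqv.refl a
    · right
      intro a b
      have collapse : ∀ pp qq : V, Relation.EqvGen t pp qq →
          r.r ⟨gate pp, hgateΛ pp⟩ ⟨gate qq, hgateΛ qq⟩ := by
        intro pp qq hpq
        induction hpq with
        | rel pp qq hpq =>
          obtain ⟨g, hg, hp, hq, hr⟩ := hpq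
          set B : Set V := ⇑g⁻¹ '' Λ with hBdef
          have hBblock : IsBlockOf Γ B := st8_block_image g⁻¹ (hGadj g⁻¹ (inv_mem hg)) hΛ
          have hpB : pp ∈ B := ⟨g pp, hp, by simp⟩
          have hqB : qq ∈ B := ⟨g qq, hq, by simp⟩
          by_cases hBΛ : B = Λ
          · have hpΛ2 : pp ∈ Λ := hBΛ ▸ hpB
            have hqΛ2 : qq ∈ Λ := hBΛ ▸ hqB
            have hgimg : ⇑g '' Λ = Λ := by
              have hcal := congrArg (Set.image ⇑g) hBΛ
              rw [hBdef, ← Set.image_comp,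
                (by funext z; simp : ⇑g ∘ ⇑g⁻¹ = id), Set.image_id] at hcal
              exact hcal.symm
            have hr2 : r.r ⟨pp, hpΛ2⟩ ⟨qq, hqΛ2⟩ :=
              (hinv g hg hgimg pp qq hpΛ2 hqΛ2 hp hq).mpr hr
            exact rcongr (gate_mem pp hpΛ2).symm (gate_mem qq hqΛ2).symm hr2
          · have hg12 : gate pp = gate qq := fconst B hBblock hBΛ pp qq hpB hqB
            have heq : (⟨gate pp, hgateΛ pp⟩ : Λ) = ⟨gate qq, hgateΛ qq⟩ := Subtype.ext hg12
            exact heq ▸ r.iseqv.refl (⟨gate pp, hgateΛ pp⟩ : Λ)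
        | refl pp => exact r.iseqv.refl _
        | symm pp qq _ ih => exact r.iseqv.symm ih
        | trans pp qq ss _ _ ih1 ih2 => exact r.iseqv.trans ih1 ih2
      have hcol := collapse a.1 b.1 (huniv a.1 b.1)
      have ea : (⟨gate a.1, hgateΛ a.1⟩ : Λ) = a := Subtype.ext (gate_mem a.1 a.2)
      have eb : (⟨gate b.1, hgateΛ b.1⟩ : Λ) = b := Subtype.ext (gate_mem b.1 b.2)
      rwa [ea, eb] at hcol
  refine ⟨?_, main2⟩
  -- Part 1 : transitivity, via Part 2 applied to the orbit relation
  intro a b ha hb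
  set rel : Λ → Λ → Prop := fun uu vv => ∃ g ∈ G, ⇑g '' Λ = Λ ∧ g (uu : V) = vv with hreldef
  have himg_inv : ∀ g : Equiv.Perm V, ⇑g '' Λ = Λ → ⇑g⁻¹ '' Λ = Λ := by
    intro g him
    have hcal := congrArg (Set.image ⇑g⁻¹) him
    rw [← Set.image_comp, (by funext z; simp : ⇑g⁻¹ ∘ ⇑g = id), Set.image_id] at hcal
    exact hcal.symm
  have himg_mul : ∀ g k : Equiv.Perm V, ⇑g '' Λ = Λ → ⇑k '' Λ = Λ → ⇑(k * g) '' Λ = Λ := by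
    intro g k hgg hkk
    have hcomp : ⇑(k * g) '' Λ = ⇑k '' (⇑g '' Λ) := by
      rw [← Set.image_comp]
      rfl
    rw [hcomp, hgg, hkk]
  have requiv : Equivalence rel := by
    constructor
    · intro uu
      exact ⟨1, one_mem G, by simp, by simp⟩
    · rintro uu vv ⟨g, hg, him, happ⟩
      refine ⟨g⁻¹, inv_mem hg, himg_inv g him, ?_⟩
      rw [← happ]
      simp
    · rintro uu vv ww ⟨g, hg, him, happ⟩ ⟨k, hk, him', happ'⟩
      refine ⟨k * g, mul_mem hk hg, himg_mul g k him him', ?_⟩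
      simp [happ, happ']
  rcases main2 ⟨rel, requiv⟩ (by
    intro g hg hgim pp qq hp hq hgp hgq
    constructor
    · rintro ⟨k, hk, him, happ⟩
      refine ⟨g * k * g⁻¹, mul_mem (mul_mem hg hk) (inv_mem hg), ?_, ?_⟩
      · rw [mul_assoc]
        exact himg_mul (k * g⁻¹) g (himg_mul g⁻¹ k (himg_inv g hgim) him) hgim
      · simp [happ]
    · rintro ⟨k, hk, him, happ⟩
      refine ⟨g⁻¹ * k * g, mul_mem (mul_mem (inv_mem hg) hk) hg, ?_, ?_⟩
      · rw [mul_assoc]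
        exact himg_mul (k * g) g⁻¹ (himg_mul g k hgim him) (himg_inv g hgim)
      · simp [happ]) with htriv | huniv
  · exfalso
    obtain ⟨g, hg, hgΛ, q, hqΛ, hmove⟩ := moved
    have hgqΛ : g q ∈ Λ := by
      rw [← hgΛ]
      exact ⟨q, hqΛ, rfl⟩
    have hrel : rel ⟨q, hqΛ⟩ ⟨g q, hgqΛ⟩ := ⟨g, hg, hgΛ, rfl⟩
    have hsame := (htriv _ _).mp hrel
    exact hmove (congrArg Subtype.val hsame).symm
  · obtain ⟨g, hg, him, happ⟩ := huniv ⟨a, ha⟩ ⟨b, hb⟩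
    exact ⟨g, hg, him, happ⟩
end

section
/- Suppose Γ is a vertex-transitive graph with connectivity one whose blocks are vertex-transitive, pairwise isomorphic, and each has at least three vertices. Then for any block Λ of Γ, every automorphism of Λ extends to an automorphism of Γ; that is, the group induced on VΛ by the setwise stabiliser (Aut Γ)_{{Λ}} equals Aut Λ. -/
open Pointwise

/-!
The automorphism is grown from `e` along the block-cut-vertex tree, by Zorn's lemma. A partial
extension is a partial isomorphism `F` whose domain and codomain span subtrees, together with a
matching `M` that decides in advance, for every block hanging off the domain at `c`, which block
hanging off the codomain at `F c` will be its image. Such a matching between the blocks at `c`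
and at `F c` other than the ones already used exists because the graph is vertex-transitive: an
automorphism moving `c` to `F c` matches the two stars, and a swap corrects the used block. A
hanging block is then added through an isomorphism onto its partner fixing the common vertex,
which exists because blocks are pairwise isomorphic and vertex-transitive. As blocks form a tree,
the new block is joined to the old domain only through that vertex, so the union is again a
partial isomorphism. Unions of chains are partial extensions, and a maximal one is total.
-/

theorem Set.forall_mem_sUnion_of_directedOn {α : Type*} {𝒮 : Set (Set α)}
    (h𝒮 : DirectedOn (· ⊆ ·) 𝒮) {r : α → α → Prop}
    (hr : ∀ S ∈ 𝒮, ∀ x ∈ S, ∀ y ∈ S, r x y) : ∀ x ∈ ⋃₀ 𝒮, ∀ y ∈ ⋃₀ 𝒮, r x y := by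
  rintro x ⟨S, hS, hx⟩ y ⟨T, hT, hy⟩
  obtain ⟨U, hU, hSU, hTU⟩ := h𝒮 S hS T hT
  exact hr U hU x (hSU hx) y (hTU hy)

/-! ### Partial bijections -/

namespace SetRel

variable {α β : Type*} {R R₁ R₂ : SetRel α β}

def IsPartialBij (R : SetRel α β) : Prop :=
  ∀ p ∈ R, ∀ q ∈ R, p.1 = q.1 ↔ p.2 = q.2

theorem dom_union : (R₁ ∪ R₂).dom = R₁.dom ∪ R₂.dom := by
  ext; simp [exists_or]

theorem cod_union : (R₁ ∪ R₂).cod = R₁.cod ∪ R₂.cod := by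
  ext; simp [exists_or]

theorem dom_sUnion (𝓡 : Set (SetRel α β)) : SetRel.dom (⋃₀ 𝓡) = ⋃₀ (dom '' 𝓡) := by
  ext; simp only [mem_dom, Set.mem_sUnion, Set.mem_image, exists_exists_and_eq_and]; grind

theorem cod_sUnion (𝓡 : Set (SetRel α β)) : SetRel.cod (⋃₀ 𝓡) = ⋃₀ (cod '' 𝓡) := by
  ext; simp only [mem_cod, Set.mem_sUnion, Set.mem_image, exists_exists_and_eq_and]; grind

namespace IsPartialBij

theorem union (h₁ : R₁.IsPartialBij) (h₂ : R₂.IsPartialBij)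
    (h : ∀ p ∈ R₁, ∀ q ∈ R₂, p.1 = q.1 ↔ p.2 = q.2) : (R₁ ∪ R₂).IsPartialBij := by
  rintro p (hp | hp) q (hq | hq)
  · exact h₁ p hp q hq
  · exact h p hp q hq
  · exact eq_comm.trans ((h q hq p hp).trans eq_comm)
  · exact h₂ p hp q hq

theorem union_of_inter_subset (h₁ : R₁.IsPartialBij) (h₂ : R₂.IsPartialBij) {y : α} {y' : β}
    (hy₁ : (y, y') ∈ R₁) (hy₂ : (y, y') ∈ R₂) (hdom : R₁.dom ∩ R₂.dom ⊆ {y})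
    (hcod : R₁.cod ∩ R₂.cod ⊆ {y'}) : (R₁ ∪ R₂).IsPartialBij := by
  refine h₁.union h₂ fun p hp q hq => ⟨fun h => ?_, fun h => ?_⟩
  · have hp1 : p.1 = y := hdom ⟨⟨p.2, hp⟩, h ▸ ⟨q.2, hq⟩⟩
    exact ((h₁ p hp _ hy₁).mp hp1).trans ((h₂ q hq _ hy₂).mp (h ▸ hp1)).symm
  · have hp2 : p.2 = y' := hcod ⟨⟨p.1, hp⟩, h ▸ ⟨q.1, hq⟩⟩
    exact ((h₁ p hp _ hy₁).mpr hp2).trans ((h₂ q hq _ hy₂).mpr (h ▸ hp2)).symm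

theorem union_of_disjoint (h₁ : R₁.IsPartialBij) (h₂ : R₂.IsPartialBij)
    (hdom : Disjoint R₁.dom R₂.dom) (hcod : Disjoint R₁.cod R₂.cod) :
    (R₁ ∪ R₂).IsPartialBij :=
  h₁.union h₂ fun p hp q hq =>
    iff_of_false (hdom.ne_of_mem ⟨p.2, hp⟩ ⟨q.2, hq⟩) (hcod.ne_of_mem ⟨p.1, hp⟩ ⟨q.1, hq⟩)

theorem sUnion {𝓡 : Set (SetRel α β)} (h : ∀ R ∈ 𝓡, R.IsPartialBij)
    (hdir : DirectedOn (· ⊆ ·) 𝓡) : IsPartialBij (⋃₀ 𝓡) :=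
  Set.forall_mem_sUnion_of_directedOn hdir h

theorem exists_perm {R : SetRel α α} (h : R.IsPartialBij) (hdom : R.dom = Set.univ)
    (hcod : R.cod = Set.univ) : ∃ g : Equiv.Perm α, ∀ a, (a, g a) ∈ R := by
  choose f hf using fun a => (hdom ▸ Set.mem_univ a : a ∈ R.dom)
  refine ⟨Equiv.ofBijective f ⟨fun a b hab => (h _ (hf a) _ (hf b)).mpr hab, fun b => ?_⟩, hf⟩
  obtain ⟨a, ha⟩ := (hcod ▸ Set.mem_univ b : b ∈ R.cod)
  exact ⟨a, (h _ (hf a) _ ha).mp rfl⟩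

end IsPartialBij

def PreservesRel (E : α → α → Prop) (R : SetRel α α) : Prop :=
  ∀ p ∈ R, ∀ q ∈ R, E p.1 q.1 ↔ E p.2 q.2

theorem PreservesRel.union {E : α → α → Prop} {R₁ R₂ : SetRel α α} (h₁ : R₁.PreservesRel E)
    (h₂ : R₂.PreservesRel E) (hb₁ : R₁.IsPartialBij) (hb₂ : R₂.IsPartialBij) {y y' : α}
    (hy₁ : (y, y') ∈ R₁) (hy₂ : (y, y') ∈ R₂)
    (hdom : ∀ u ∈ R₁.dom, ∀ w ∈ R₂.dom, u ≠ y → w ≠ y → ¬ E u w ∧ ¬ E w u)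
    (hcod : ∀ u ∈ R₁.cod, ∀ w ∈ R₂.cod, u ≠ y' → w ≠ y' → ¬ E u w ∧ ¬ E w u) :
    (R₁ ∪ R₂).PreservesRel E := by
  have cross : ∀ p ∈ R₁, ∀ q ∈ R₂, (E p.1 q.1 ↔ E p.2 q.2) ∧ (E q.1 p.1 ↔ E q.2 p.2) := by
    intro p hp q hq
    by_cases hp1 : p.1 = y
    · rw [hp1, (hb₁ p hp _ hy₁).mp hp1]
      exact ⟨h₂ _ hy₂ q hq, h₂ q hq _ hy₂⟩
    by_cases hq1 : q.1 = y
    · rw [hq1, (hb₂ q hq _ hy₂).mp hq1]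
      exact ⟨h₁ p hp _ hy₁, h₁ _ hy₁ p hp⟩
    have hd := hdom p.1 ⟨p.2, hp⟩ q.1 ⟨q.2, hq⟩ hp1 hq1
    have hc := hcod p.2 ⟨p.1, hp⟩ q.2 ⟨q.1, hq⟩ (mt (hb₁ p hp _ hy₁).mpr hp1)
      (mt (hb₂ q hq _ hy₂).mpr hq1)
    exact ⟨iff_of_false hd.1 hc.1, iff_of_false hd.2 hc.2⟩
  rintro p (hp | hp) q (hq | hq)
  · exact h₁ p hp q hq
  · exact (cross p hp q hq).1
  · exact (cross q hq p hp).2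
  · exact h₂ p hp q hq

end SetRel

namespace Equiv

variable {α β : Type*} {s : Set α} {t : Set β}

def setGraph (ψ : s ≃ t) : SetRel α β :=
  Set.range fun x : s => ((x : α), (ψ x : β))

variable (ψ : s ≃ t)

theorem mem_setGraph (x : s) : ((x : α), (ψ x : β)) ∈ ψ.setGraph :=
  ⟨x, rfl⟩

theorem dom_setGraph : ψ.setGraph.dom = s := by
  ext a
  refine ⟨?_, fun ha => ⟨_, ψ.mem_setGraph ⟨a, ha⟩⟩⟩
  rintro ⟨_, x, hx⟩
  rw [← (Prod.mk.inj hx).1]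
  exact x.2

theorem cod_setGraph : ψ.setGraph.cod = t := by
  ext b
  refine ⟨?_, fun hb => ⟨_, by simpa using ψ.mem_setGraph (ψ.symm ⟨b, hb⟩)⟩⟩
  rintro ⟨_, x, hx⟩
  rw [← (Prod.mk.inj hx).2]
  exact (ψ x).2

theorem isPartialBij_setGraph : ψ.setGraph.IsPartialBij := by
  rintro _ ⟨x, rfl⟩ _ ⟨y, rfl⟩
  simp only [← Subtype.ext_iff, ψ.injective.eq_iff]

theorem preservesRel_setGraph {E : α → α → Prop} {s' : Set α} {ψ : s ≃ s'}
    (hψ : ∀ x y : s, E x y ↔ E (ψ x) (ψ y)) : ψ.setGraph.PreservesRel E := by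
  rintro _ ⟨x, rfl⟩ _ ⟨y, rfl⟩
  exact hψ x y

end Equiv

/-! ### Blocks -/

namespace SimpleGraph

variable {V W : Type*} {G : SimpleGraph V}

def ReachableIn (G : SimpleGraph V) (S : Set V) (u v : V) : Prop :=
  ∃ p : G.Walk u v, ∀ w ∈ p.support, w ∈ S

namespace ReachableIn

variable {S T : Set V} {u v w : V}

theorem refl (hu : u ∈ S) : G.ReachableIn S u u :=
  ⟨.nil, by simpa using hu⟩

theorem right_mem (h : G.ReachableIn S u v) : v ∈ S :=
  h.choose_spec v h.choose.end_mem_support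

theorem symm (h : G.ReachableIn S u v) : G.ReachableIn S v u :=
  let ⟨p, hp⟩ := h
  ⟨p.reverse, fun w hw => hp w (by simpa using hw)⟩

theorem trans (h₁ : G.ReachableIn S u v) (h₂ : G.ReachableIn S v w) : G.ReachableIn S u w :=
  let ⟨p, hp⟩ := h₁
  let ⟨q, hq⟩ := h₂
  ⟨p.append q, fun x hx => (Walk.mem_support_append_iff p q).mp hx |>.elim (hp x) (hq x)⟩

theorem mono (h : G.ReachableIn S u v) (hST : S ⊆ T) : G.ReachableIn T u v :=
  let ⟨p, hp⟩ := h
  ⟨p, fun x hx => hST (hp x hx)⟩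

theorem map {G' : SimpleGraph W} (f : G →g G') (h : G.ReachableIn S u v) :
    G'.ReachableIn (f '' S) (f u) (f v) :=
  let ⟨p, hp⟩ := h
  ⟨p.map f, fun x hx => by
    rw [Walk.support_map, List.mem_map] at hx
    obtain ⟨x, hx, rfl⟩ := hx
    exact Set.mem_image_of_mem f (hp x hx)⟩

end ReachableIn

theorem reachableIn_iff_reachable_induce {S : Set V} {u v : S} :
    G.ReachableIn S u v ↔ (G.induce S).Reachable u v := by
  constructor
  · rintro ⟨p, hp⟩
    exact ⟨p.induce S hp⟩
  · rintro ⟨p⟩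
    exact (ReachableIn.map (Embedding.induce S).toHom ⟨p, fun _ _ => Set.mem_univ _⟩).mono
      (by rintro _ ⟨w, -, rfl⟩; exact w.2)

theorem preconnected_induce_iff_reachableIn {S : Set V} :
    (G.induce S).Preconnected ↔ ∀ u ∈ S, ∀ v ∈ S, G.ReachableIn S u v :=
  ⟨fun h u hu v hv => reachableIn_iff_reachable_induce.mpr (h ⟨u, hu⟩ ⟨v, hv⟩),
    fun h u v => reachableIn_iff_reachable_induce.mp (h u u.2 v v.2)⟩

theorem Walk.IsPath.reachableIn_or [DecidableEq V] {a b u v : V} {p : G.Walk a b}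
    (hp : p.IsPath) (hu : u ∈ p.support) (huv : u ≠ v) :
    G.ReachableIn ({w | w ∈ p.support} \ {v}) u a ∨
      G.ReachableIn ({w | w ∈ p.support} \ {v}) u b := by
  by_cases hv : v ∈ (p.takeUntil u hu).support
  · right
    have hnodup := hp.support_nodup
    rw [← p.take_spec hu, Walk.support_append] at hnodup
    have hv' : v ∉ (p.dropUntil u hu).support := fun hv' =>
      List.disjoint_of_nodup_append hnodup hv <|
        (List.mem_cons.mp ((p.dropUntil u hu).cons_tail_support ▸ hv')).resolve_left huv.symm
    exact ⟨p.dropUntil u hu, fun w hw =>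
      ⟨p.support_dropUntil_subset_support hu hw, fun h => hv' (h ▸ hw)⟩⟩
  · left
    exact ⟨(p.takeUntil u hu).reverse, fun w hw => by
      rw [Walk.support_reverse, List.mem_reverse] at hw
      exact ⟨p.support_takeUntil_subset_support hu hw, fun h => hv (h ▸ hw)⟩⟩

def IsNonseparable (G : SimpleGraph V) (X : Set V) : Prop :=
  (G.induce X).Connected ∧ ∀ b ∈ X, (G.induce (X \ {b})).Preconnected

theorem isBlockOf_iff_maximal {B : Set V} : IsBlockOf G B ↔ Maximal G.IsNonseparable B := by
  rw [maximal_subset_iff]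
  exact ⟨fun ⟨h₁, h₂, h₃⟩ => ⟨⟨h₁, h₂⟩, fun C hC hBC => h₃ C hBC hC.1 hC.2⟩,
    fun ⟨⟨h₁, h₂⟩, h₃⟩ => ⟨h₁, h₂, fun _ hBC hC₁ hC₂ => h₃ ⟨hC₁, hC₂⟩ hBC⟩⟩

namespace IsNonseparable

variable {X Y : Set V}

theorem nonempty (h : G.IsNonseparable X) : X.Nonempty :=
  Set.nonempty_coe_sort.mp h.1.nonempty

theorem reachableIn (h : G.IsNonseparable X) {u w : V} (hu : u ∈ X) (hw : w ∈ X) :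
    G.ReachableIn X u w :=
  preconnected_induce_iff_reachableIn.mp h.1.preconnected u hu w hw

theorem reachableIn_diff (h : G.IsNonseparable X) (v : V) {u w : V} (hu : u ∈ X \ {v})
    (hw : w ∈ X \ {v}) : G.ReachableIn (X \ {v}) u w := by
  by_cases hv : v ∈ X
  · exact preconnected_induce_iff_reachableIn.mp (h.2 v hv) u hu w hw
  · rw [Set.sdiff_singleton_eq_self hv] at hu hw ⊢
    exact h.reachableIn hu hw

theorem of_reachableIn (hne : X.Nonempty) (h₁ : ∀ u ∈ X, ∀ w ∈ X, G.ReachableIn X u w)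
    (h₂ : ∀ v, ∀ u ∈ X \ {v}, ∀ w ∈ X \ {v}, G.ReachableIn (X \ {v}) u w) :
    G.IsNonseparable X :=
  ⟨(connected_iff _).mpr ⟨preconnected_induce_iff_reachableIn.mpr h₁, hne.coe_sort⟩,
    fun v _ => preconnected_induce_iff_reachableIn.mpr (h₂ v)⟩

theorem union_of_forall_reachableIn (hX : G.IsNonseparable X) (hXnt : X.Nontrivial)
    (hY : ∀ v, ∀ u ∈ Y \ {v}, ∃ x ∈ X \ {v}, G.ReachableIn ((X ∪ Y) \ {v}) u x) :
    G.IsNonseparable (X ∪ Y) := by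
  have hreach : ∀ v, ∀ u ∈ (X ∪ Y) \ {v}, ∃ x ∈ X \ {v}, G.ReachableIn ((X ∪ Y) \ {v}) u x := by
    rintro v u ⟨hu | hu, huv⟩
    · exact ⟨u, ⟨hu, huv⟩, .refl ⟨.inl hu, huv⟩⟩
    · exact hY v u ⟨hu, huv⟩
  refine of_reachableIn (hX.nonempty.mono Set.subset_union_left) (fun u hu w hw => ?_)
    fun v u hu w hw => ?_
  · have key : ∀ u ∈ X ∪ Y, ∃ x ∈ X, G.ReachableIn (X ∪ Y) u x := fun u hu => by
      obtain ⟨v, -, hvu⟩ := hXnt.exists_ne u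
      obtain ⟨x, hx, hux⟩ := hreach v u ⟨hu, fun h => hvu h.symm⟩
      exact ⟨x, hx.1, hux.mono Set.sdiff_subset⟩
    obtain ⟨x, hx, hux⟩ := key u hu
    obtain ⟨x', hx', hwx'⟩ := key w hw
    exact (hux.trans ((hX.reachableIn hx hx').mono Set.subset_union_left)).trans hwx'.symm
  · obtain ⟨x, hx, hux⟩ := hreach v u hu
    obtain ⟨x', hx', hwx'⟩ := hreach v w hw
    exact (hux.trans ((hX.reachableIn_diff v hx hx').mono
      (Set.sdiff_subset_sdiff_left Set.subset_union_left))).trans hwx'.symm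

theorem union (hX : G.IsNonseparable X) (hY : G.IsNonseparable Y) {p q : V} (hp : p ∈ X ∩ Y)
    (hq : q ∈ X ∩ Y) (hpq : p ≠ q) : G.IsNonseparable (X ∪ Y) := by
  refine hX.union_of_forall_reachableIn ⟨p, hp.1, q, hq.1, hpq⟩ fun v u hu => ?_
  obtain ⟨t, ht, htv⟩ : ∃ t ∈ X ∩ Y, t ≠ v := by
    by_cases hpv : p = v
    · exact ⟨q, hq, fun h => hpq (hpv.trans h.symm)⟩
    · exact ⟨p, hp, hpv⟩
  exact ⟨t, ⟨ht.1, htv⟩, (hY.reachableIn_diff v hu ⟨ht.2, htv⟩).mono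
    (Set.sdiff_subset_sdiff_left Set.subset_union_right)⟩

theorem sUnion {𝒮 : Set (Set V)} (h𝒮 : ∀ X ∈ 𝒮, G.IsNonseparable X)
    (hdir : DirectedOn (· ⊆ ·) 𝒮) (hne : 𝒮.Nonempty) : G.IsNonseparable (⋃₀ 𝒮) := by
  obtain ⟨X, hX⟩ := hne
  refine of_reachableIn ((h𝒮 X hX).nonempty.mono (Set.subset_sUnion_of_mem hX))
    (Set.forall_mem_sUnion_of_directedOn hdir fun X hX u hu w hw =>
      ((h𝒮 X hX).reachableIn hu hw).mono (Set.subset_sUnion_of_mem hX))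
    fun v u hu w hw => ?_
  refine Set.forall_mem_sUnion_of_directedOn hdir
    (r := fun u w => u ∉ ({v} : Set V) → w ∉ ({v} : Set V) → G.ReachableIn (⋃₀ 𝒮 \ {v}) u w)
    (fun X hX u hu w hw hu' hw' => ?_) u hu.1 w hw.1 hu.2 hw.2
  exact ((h𝒮 X hX).reachableIn_diff v ⟨hu, hu'⟩ ⟨hw, hw'⟩).mono
    (Set.sdiff_subset_sdiff_left (Set.subset_sUnion_of_mem hX))

theorem exists_isBlockOf_superset (hX : G.IsNonseparable X) : ∃ B, IsBlockOf G B ∧ X ⊆ B := by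
  obtain ⟨B, hXB, hB⟩ := zorn_subset_nonempty {Y | G.IsNonseparable Y}
    (fun c hc hchain hne => ⟨⋃₀ c, sUnion hc hchain.directedOn hne,
      fun _ => Set.subset_sUnion_of_mem⟩) X hX
  exact ⟨B, isBlockOf_iff_maximal.mpr hB, hXB⟩

theorem image {W : Type*} {G' : SimpleGraph W} (φ : G ≃g G') (h : G.IsNonseparable X) :
    G'.IsNonseparable (φ '' X) := by
  refine of_reachableIn (h.nonempty.image φ)
    (by rintro _ ⟨u, hu, rfl⟩ _ ⟨w, hw, rfl⟩; exact (h.reachableIn hu hw).map φ.toHom) ?_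
  rintro v _ ⟨⟨u, hu, rfl⟩, huv⟩ _ ⟨⟨w, hw, rfl⟩, hwv⟩
  obtain ⟨v, rfl⟩ := φ.surjective v
  rw [← Set.image_singleton, ← Set.image_sdiff φ.injective]
  exact (h.reachableIn_diff v ⟨hu, fun h => huv (h ▸ rfl)⟩ ⟨hw, fun h => hwv (h ▸ rfl)⟩).map
    φ.toHom

end IsNonseparable

theorem isNonseparable_pair {u v : V} (h : G.Adj u v) : G.IsNonseparable {u, v} := by
  refine ⟨induce_pair_connected_of_adj h, fun b _ x y => ?_⟩
  obtain rfl : x = y := by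
    obtain ⟨x, hx, hxb⟩ := x
    obtain ⟨y, hy, hyb⟩ := y
    simp only [Set.mem_insert_iff, Set.mem_singleton_iff] at hx hy hxb hyb
    grind
  rfl

theorem exists_isBlockOf_of_adj {u v : V} (h : G.Adj u v) :
    ∃ B, IsBlockOf G B ∧ u ∈ B ∧ v ∈ B :=
  let ⟨B, hB, huv⟩ := (isNonseparable_pair h).exists_isBlockOf_superset
  ⟨B, hB, huv (by simp), huv (by simp)⟩

theorem Preconnected.exists_isBlockOf_not_subset (hG : G.Preconnected) {S : Set V}
    (hS : S.Nonempty) (hSV : S ≠ Set.univ) : ∃ B, IsBlockOf G B ∧ (B ∩ S).Nonempty ∧ ¬ B ⊆ S := by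
  obtain ⟨x, hx⟩ := hS
  obtain ⟨z, hz⟩ := (Set.ne_univ_iff_exists_notMem S).mp hSV
  obtain ⟨d, -, hd₁, hd₂⟩ := (hG x z).some.exists_boundary_dart S hx hz
  obtain ⟨B, hB, h₁, h₂⟩ := exists_isBlockOf_of_adj d.adj
  exact ⟨B, hB, ⟨_, h₁, hd₁⟩, fun h => hd₂ (h h₂)⟩

end SimpleGraph

open SimpleGraph

theorem IsCutVertexOf.nontrivial {V : Type*} {G : SimpleGraph V} {a : V}
    (h : IsCutVertexOf G a) : Nontrivial V := by
  by_contra hV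
  rw [not_nontrivial_iff_subsingleton] at hV
  exact h fun x y => by rw [Subtype.ext (Subsingleton.elim (x : V) y)]

namespace IsBlockOf

variable {V : Type*} {G : SimpleGraph V} {B C D : Set V}

theorem isNonseparable (hB : IsBlockOf G B) : G.IsNonseparable B :=
  ⟨hB.1, hB.2.1⟩

theorem eq_of_subset (hB : IsBlockOf G B) (hC : G.IsNonseparable C) (hBC : B ⊆ C) : B = C :=
  hB.2.2 C hBC hC.1 hC.2

theorem eq_of_nontrivial_inter (hB : IsBlockOf G B) (hC : IsBlockOf G C)
    (h : (B ∩ C).Nontrivial) : B = C := by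
  obtain ⟨p, hp, q, hq, hpq⟩ := h
  have hBC := hB.isNonseparable.union hC.isNonseparable hp hq hpq
  exact (hB.eq_of_subset hBC Set.subset_union_left).trans
    (hC.eq_of_subset hBC Set.subset_union_right).symm

theorem nontrivial [Nontrivial V] (hG : G.Preconnected) (hB : IsBlockOf G B) : B.Nontrivial := by
  obtain ⟨v, hv⟩ := hB.isNonseparable.nonempty
  obtain ⟨w, hvw⟩ := hG.exists_adj_of_nontrivial v
  by_contra hnt
  have hsub := Set.not_nontrivial_iff.mp hnt
  have hBvw := hB.eq_of_subset (isNonseparable_pair hvw) fun x hx => Or.inl (hsub hx hv)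
  exact hvw.ne (hsub hv (hBvw ▸ Or.inr rfl))

/-- There are no cycles of blocks: `B ∪ D` together with a path from `s` to `c` avoiding `q` has
no cut vertex, so the maximality of `B` and of `D` forces `D = B`. -/
theorem eq_of_reachableIn_compl (hB : IsBlockOf G B) (hD : IsBlockOf G D) {q c s : V}
    (hqB : q ∈ B) (hqD : q ∈ D) (hcB : c ∈ B) (hsD : s ∈ D) (h : G.ReachableIn {q}ᶜ s c) :
    D = B := by
  classical
  obtain ⟨w, hw⟩ := h
  set p : G.Walk s c := w.toPath.1
  have hp : p.IsPath := w.toPath.2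
  set P : Set V := {x | x ∈ p.support}
  have hPq : ∀ x ∈ P, x ≠ q := fun x hx => hw x (w.support_toPath_subset_support hx)
  have hqc : q ≠ c := (hPq c p.end_mem_support).symm
  have hsq : s ≠ q := hPq s p.start_mem_support
  have hDreach : ∀ v, ∀ u ∈ D \ {v}, ∃ x ∈ B \ {v}, G.ReachableIn ((B ∪ (D ∪ P)) \ {v}) u x := by
    intro v u hu
    by_cases hvq : v = q
    · subst hvq
      have hsc : G.ReachableIn (P \ {v}) s c := ⟨p, fun x hx => ⟨hx, hPq x hx⟩⟩
      exact ⟨c, ⟨hcB, hqc.symm⟩,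
        ((hD.isNonseparable.reachableIn_diff v hu ⟨hsD, hsq⟩).mono (by tauto_set)).trans
          (hsc.mono (by tauto_set))⟩
    · exact ⟨q, ⟨hqB, Ne.symm hvq⟩,
        (hD.isNonseparable.reachableIn_diff v hu ⟨hqD, Ne.symm hvq⟩).mono (by tauto_set)⟩
  have hBY : G.IsNonseparable (B ∪ (D ∪ P)) := by
    refine hB.isNonseparable.union_of_forall_reachableIn ⟨q, hqB, c, hcB, hqc⟩ ?_
    rintro v u ⟨hu | hu, huv⟩
    · exact hDreach v u ⟨hu, huv⟩
    · rcases hp.reachableIn_or hu huv with h | h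
      · obtain ⟨x, hx, hsx⟩ := hDreach v s ⟨hsD, h.right_mem.2⟩
        exact ⟨x, hx, (h.mono (by tauto_set)).trans hsx⟩
      · exact ⟨c, ⟨hcB, h.right_mem.2⟩, h.mono (by tauto_set)⟩
  have hBeq := hB.eq_of_subset hBY Set.subset_union_left
  exact hD.eq_of_subset hB.isNonseparable fun x hx => hBeq ▸ Or.inr (Or.inl hx)

end IsBlockOf

/-! ### Subtrees of the block-cut-vertex tree -/

namespace SimpleGraph

variable {V : Type*} {G : SimpleGraph V}

/-- Such sets span subtrees of the block-cut-vertex tree. -/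
structure IsBlockConvex (G : SimpleGraph V) (S : Set V) : Prop where
  reachableIn : ∀ u ∈ S, ∀ v ∈ S, G.ReachableIn S u v
  subset_of_nontrivial : ∀ D, IsBlockOf G D → (D ∩ S).Nontrivial → D ⊆ S

namespace IsBlockConvex

variable {S B D : Set V} {y : V}

theorem inter_eq_singleton (hS : G.IsBlockConvex S) (hD : IsBlockOf G D) (hy : y ∈ D ∩ S)
    (hDS : ¬ D ⊆ S) : D ∩ S = {y} :=
  (Set.not_nontrivial_iff.mp (mt (hS.subset_of_nontrivial D hD) hDS)).eq_singleton_of_mem hy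

-- A vertex of `D ∩ B` outside `S` would close a cycle of blocks through a walk inside `S`.
theorem inter_subset (hS : G.IsBlockConvex S) (hB : IsBlockOf G B) (hy : y ∈ B ∩ S)
    (hD : IsBlockOf G D) (hDB : D ≠ B) (hDS : (D ∩ S).Nonempty) : D ∩ B ⊆ S := by
  rintro q ⟨hqD, hqB⟩
  by_contra hqS
  obtain ⟨s, hsD, hsS⟩ := hDS
  exact hDB (hB.eq_of_reachableIn_compl hD hqB hqD hy.1 hsD
    ((hS.reachableIn s hsS y hy.2).mono fun x hx (h : x = q) => hqS (h ▸ hx)))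

theorem mem_of_adj (hS : G.IsBlockConvex S) (hB : IsBlockOf G B) (hy : y ∈ B ∩ S) {u w : V}
    (hu : u ∈ S) (hw : w ∈ B) (hwS : w ∉ S) (hadj : G.Adj u w) : u ∈ B := by
  obtain ⟨D, hD, huD, hwD⟩ := exists_isBlockOf_of_adj hadj
  by_cases hDB : D = B
  · exact hDB ▸ huD
  · exact absurd (hS.inter_subset hB hy hD hDB ⟨u, huD, hu⟩ ⟨hwD, hw⟩) hwS

theorem union (hS : G.IsBlockConvex S) (hB : IsBlockOf G B) (hy : y ∈ B ∩ S) :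
    G.IsBlockConvex (S ∪ B) := by
  have hreach : ∀ u ∈ S ∪ B, G.ReachableIn (S ∪ B) u y := by
    rintro u (hu | hu)
    · exact (hS.reachableIn u hu y hy.2).mono Set.subset_union_left
    · exact (hB.isNonseparable.reachableIn hu hy.1).mono Set.subset_union_right
  refine ⟨fun u hu v hv => (hreach u hu).trans (hreach v hv).symm, fun D hD hnt => ?_⟩
  by_cases hDB : D = B
  · exact hDB ▸ Set.subset_union_right
  by_cases hDS : (D ∩ S).Nonempty
  · refine (hS.subset_of_nontrivial D hD (hnt.mono ?_)).trans Set.subset_union_left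
    exact fun x ⟨hxD, hx⟩ =>
      ⟨hxD, hx.elim id fun hxB => hS.inter_subset hB hy hD hDB hDS ⟨hxD, hxB⟩⟩
  · refine absurd (hD.eq_of_nontrivial_inter hB (hnt.mono ?_)) hDB
    exact fun x ⟨hxD, hx⟩ => ⟨hxD, hx.elim (fun hxS => absurd ⟨x, hxD, hxS⟩ hDS) id⟩

theorem inter_union_eq_singleton (hS : G.IsBlockConvex S) (hB : IsBlockOf G B) (hy : y ∈ B ∩ S)
    (hD : IsBlockOf G D) (hDB : D ≠ B) {d : V} (hd : d ∈ D ∩ B) (hdS : d ∉ S) :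
    D ∩ (S ∪ B) = {d} := by
  have hDS : ¬ (D ∩ S).Nonempty := fun h => hdS (hS.inter_subset hB hy hD hDB h hd)
  refine Set.Subset.antisymm ?_ (Set.singleton_subset_iff.mpr ⟨hd.1, .inr hd.2⟩)
  rintro x ⟨hxD, hxS | hxB⟩
  · exact absurd ⟨x, hxD, hxS⟩ hDS
  · by_contra hxd
    exact hDB (hD.eq_of_nontrivial_inter hB ⟨x, ⟨hxD, hxB⟩, d, hd, hxd⟩)

theorem subset_union_iff (hS : G.IsBlockConvex S) (hB : IsBlockOf G B) (hy : y ∈ B ∩ S)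
    (hD : IsBlockOf G D) (hDB : D ≠ B) (hDS : (D ∩ S).Nonempty) : D ⊆ S ∪ B ↔ D ⊆ S :=
  ⟨fun h _ hx => (h hx).elim id fun hxB => hS.inter_subset hB hy hD hDB hDS ⟨hx, hxB⟩,
    fun h => h.trans Set.subset_union_left⟩

theorem sUnion {𝒮 : Set (Set V)} (h𝒮 : ∀ S ∈ 𝒮, G.IsBlockConvex S)
    (hdir : DirectedOn (· ⊆ ·) 𝒮) : G.IsBlockConvex (⋃₀ 𝒮) := by
  refine ⟨Set.forall_mem_sUnion_of_directedOn hdir fun S hS u hu v hv =>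
    ((h𝒮 S hS).reachableIn u hu v hv).mono (Set.subset_sUnion_of_mem hS), ?_⟩
  rintro D hD ⟨x, ⟨hxD, hx⟩, z, ⟨hzD, hz⟩, hxz⟩
  refine Set.forall_mem_sUnion_of_directedOn hdir
    (r := fun x z => x ∈ D → z ∈ D → x ≠ z → D ⊆ ⋃₀ 𝒮)
    (fun S hS x hx z hz hxD hzD hxz => ?_) x hx z hz hxD hzD hxz
  exact ((h𝒮 S hS).subset_of_nontrivial D hD ⟨x, ⟨hxD, hx⟩, z, ⟨hzD, hz⟩, hxz⟩).trans
    (Set.subset_sUnion_of_mem hS)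

theorem exists_subset_of_subset_sUnion {𝒮 : Set (Set V)} (h𝒮 : ∀ S ∈ 𝒮, G.IsBlockConvex S)
    (hdir : DirectedOn (· ⊆ ·) 𝒮) (hD : IsBlockOf G D) (hDnt : D.Nontrivial)
    (h : D ⊆ ⋃₀ 𝒮) : ∃ S ∈ 𝒮, D ⊆ S := by
  obtain ⟨x, hx, z, hz, hxz⟩ := hDnt
  obtain ⟨S₁, hS₁, hxS⟩ := h hx
  obtain ⟨S₂, hS₂, hzS⟩ := h hz
  obtain ⟨S, hS, h₁, h₂⟩ := hdir S₁ hS₁ S₂ hS₂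
  exact ⟨S, hS, (h𝒮 S hS).subset_of_nontrivial D hD ⟨x, ⟨hx, h₁ hxS⟩, z, ⟨hz, h₂ hzS⟩, hxz⟩⟩

end IsBlockConvex

theorem _root_.IsBlockOf.isBlockConvex {B : Set V} (hB : IsBlockOf G B) : G.IsBlockConvex B :=
  ⟨fun _ hu _ hv => hB.isNonseparable.reachableIn hu hv,
    fun _ hD h => (hD.eq_of_nontrivial_inter hB h).subset⟩

theorem Iso.isBlockOf_image {W : Type*} {G' : SimpleGraph W} (φ : G ≃g G') {B : Set V}
    (hB : IsBlockOf G B) : IsBlockOf G' (φ '' B) := by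
  refine isBlockOf_iff_maximal.mpr ⟨hB.isNonseparable.image φ, fun Y hY hBY => ?_⟩
  have hB' := hB.eq_of_subset (hY.image φ.symm) fun x hx => ⟨φ x, hBY ⟨x, hx, rfl⟩, by simp⟩
  rw [hB', ← Set.image_comp]
  simp

theorem Iso.isBlockOf_image_iff {W : Type*} {G' : SimpleGraph W} (φ : G ≃g G') {B : Set V} :
    IsBlockOf G' (φ '' B) ↔ IsBlockOf G B :=
  ⟨fun h => by simpa [← Set.image_comp] using φ.symm.isBlockOf_image h, φ.isBlockOf_image⟩

def blocksAt (G : SimpleGraph V) (a : V) : Set (Set V) :=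
  {B | IsBlockOf G B ∧ a ∈ B}

theorem Iso.exists_bijOn_blocksAt (φ : G ≃g G) {a b : V} (hab : φ a = b) {A B : Set V}
    (hA : A ∈ G.blocksAt a) (hB : B ∈ G.blocksAt b) :
    ∃ τ : Set V → Set V, Set.BijOn τ (G.blocksAt a \ {A}) (G.blocksAt b \ {B}) := by
  classical
  have hφ : Set.BijOn (Equiv.Set.congr φ.toEquiv) (G.blocksAt a) (G.blocksAt b) :=
    Equiv.bijOn _ fun D => by
      simp only [blocksAt, Set.mem_ofPred_eq, Equiv.Set.congr_apply, ← hab]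
      exact and_congr φ.isBlockOf_image_iff φ.injective.mem_set_image
  have hτ := ((Equiv.bijOn_swap (hφ.mapsTo hA) hB).comp hφ).sdiff_singleton hA
  exact ⟨_, by simpa using hτ⟩

/-- The blocks hanging off `B` at the vertices `q.1 ∉ K` added by `R`, paired through `τ q` with
their future images. -/
def starMatching (G : SimpleGraph V) (τ : V × V → Set V → Set V) (R : SetRel V V)
    (B K : Set V) : SetRel (Set V) (Set V) :=
  {p | ∃ q ∈ R, q.1 ∉ K ∧ p.1 ∈ G.blocksAt q.1 \ {B} ∧ p.2 = τ q p.1}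

variable {τ : V × V → Set V → Set V} {R : SetRel V V} {B B' K : Set V}

theorem exists_bijOn_blocksAt (hvt : ∀ a b, ∃ φ : G ≃g G, φ a = b) (hB : IsBlockOf G B)
    (hB' : IsBlockOf G B') (hR : ∀ q ∈ R, q.1 ∈ B ∧ q.2 ∈ B') :
    ∃ τ : V × V → Set V → Set V,
      ∀ q ∈ R, Set.BijOn (τ q) (G.blocksAt q.1 \ {B}) (G.blocksAt q.2 \ {B'}) := by
  have : ∀ q : V × V, ∃ τ : Set V → Set V,
      q ∈ R → Set.BijOn τ (G.blocksAt q.1 \ {B}) (G.blocksAt q.2 \ {B'}) := fun q => by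
    by_cases hq : q ∈ R
    · obtain ⟨φ, hφ⟩ := hvt q.1 q.2
      obtain ⟨τ, hτ⟩ := φ.exists_bijOn_blocksAt hφ ⟨hB, (hR q hq).1⟩ ⟨hB', (hR q hq).2⟩
      exact ⟨τ, fun _ => hτ⟩
    · exact ⟨id, fun h => absurd h hq⟩
  choose τ hτ using this
  exact ⟨τ, hτ⟩

theorem exists_of_mem_starMatching
    (hτ : ∀ q ∈ R, Set.BijOn (τ q) (G.blocksAt q.1 \ {B}) (G.blocksAt q.2 \ {B'}))
    {p : Set V × Set V} (hp : p ∈ G.starMatching τ R B K) :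
    ∃ q ∈ R, q.1 ∉ K ∧ p.1 ∈ G.blocksAt q.1 \ {B} ∧ p.2 ∈ G.blocksAt q.2 \ {B'} :=
  let ⟨q, hq, hqK, hp1, hp2⟩ := hp
  ⟨q, hq, hqK, hp1, hp2 ▸ (hτ q hq).mapsTo hp1⟩

theorem mem_cod_starMatching
    (hτ : ∀ q ∈ R, Set.BijOn (τ q) (G.blocksAt q.1 \ {B}) (G.blocksAt q.2 \ {B'}))
    {q : V × V} (hq : q ∈ R) (hqK : q.1 ∉ K) {D : Set V}
    (hD : D ∈ G.blocksAt q.2 \ {B'}) : D ∈ (G.starMatching τ R B K).cod :=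
  let ⟨D₀, hD₀, hD₀D⟩ := (hτ q hq).surjOn hD
  ⟨D₀, q, hq, hqK, hD₀, hD₀D.symm⟩

theorem isPartialBij_starMatching
    (hτ : ∀ q ∈ R, Set.BijOn (τ q) (G.blocksAt q.1 \ {B}) (G.blocksAt q.2 \ {B'}))
    (hB : IsBlockOf G B) (hB' : IsBlockOf G B')
    (hR : ∀ q ∈ R, q.1 ∈ B ∧ q.2 ∈ B') (hRbij : R.IsPartialBij) :
    (G.starMatching τ R B K).IsPartialBij := by
  rintro p ⟨q, hq, -, hp1, hp2⟩ p' ⟨q', hq', -, hp1', hp2'⟩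
  have hp2m := hp2 ▸ (hτ q hq).mapsTo hp1
  have hp2m' := hp2' ▸ (hτ q' hq').mapsTo hp1'
  have key : p.1 = p'.1 ∨ p.2 = p'.2 → q = q' := by
    rintro (h | h)
    · have h1 : q.1 = q'.1 := by
        by_contra hne
        exact hp1.2 (hp1.1.1.eq_of_nontrivial_inter hB
          ⟨q.1, ⟨hp1.1.2, (hR q hq).1⟩, q'.1, ⟨h ▸ hp1'.1.2, (hR q' hq').1⟩, hne⟩)
      exact Prod.ext h1 ((hRbij q hq q' hq').mp h1)
    · have h2 : q.2 = q'.2 := by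
        by_contra hne
        exact hp2m.2 (hp2m.1.1.eq_of_nontrivial_inter hB'
          ⟨q.2, ⟨hp2m.1.2, (hR q hq).2⟩, q'.2, ⟨h ▸ hp2m'.1.2, (hR q' hq').2⟩, hne⟩)
      exact Prod.ext ((hRbij q hq q' hq').mpr h2) h2
  constructor
  · intro h
    obtain rfl := key (.inl h)
    rw [hp2, hp2', h]
  · intro h
    obtain rfl := key (.inr h)
    exact (hτ q hq).injOn hp1 hp1' (hp2 ▸ hp2' ▸ h)

end SimpleGraph

/-! ### Partial extensions -/

section PartialExtension

open SimpleGraph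

variable {V : Type*} {E : V → V → Prop}

local notation "Γ" => SimpleGraph.fromRel E

def DPreserves.toIso {g : Equiv.Perm V} (hg : DPreserves E g) : Γ ≃g Γ :=
  ⟨g, fun {a b} => by simp only [fromRel_adj, g.injective.ne_iff, hg a b, hg b a]⟩

theorem SimpleGraph.IsBlockConvex.not_rel {S B : Set V} {y u w : V} (hS : IsBlockConvex Γ S)
    (hB : IsBlockOf Γ B) (hBS : B ∩ S = {y}) (hu : u ∈ S) (hw : w ∈ B) (huy : u ≠ y)
    (hwy : w ≠ y) : ¬ E u w ∧ ¬ E w u := by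
  have hy : y ∈ B ∩ S := hBS ▸ rfl
  have hwS : w ∉ S := fun h => hwy (hBS ▸ ⟨hw, h⟩ : w ∈ ({y} : Set V))
  have huB : u ∉ B := fun h => huy (hBS ▸ ⟨h, hu⟩ : u ∈ ({y} : Set V))
  have hadj : ¬ (Γ).Adj u w := fun h => huB (hS.mem_of_adj hB hy hu hw hwS h)
  have hne : u ≠ w := fun h => hwS (h ▸ hu)
  exact ⟨fun h => hadj ((fromRel_adj _ _ _).mpr ⟨hne, .inl h⟩),
    fun h => hadj ((fromRel_adj _ _ _).mpr ⟨hne, .inr h⟩)⟩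

theorem exists_blockIso_apply_eq
    (hiso : ∀ B C : Set V, IsBlockOf Γ B → IsBlockOf Γ C → BlocksIsomorphic E B C)
    (hbvt : ∀ B : Set V, IsBlockOf Γ B → ∀ a b : B, ∃ e ∈ BlockAut E B, e a = b)
    {B C : Set V} (hB : IsBlockOf Γ B) (hC : IsBlockOf Γ C) (b : B) (c : C) :
    ∃ ψ : B ≃ C, (∀ x y : B, E x y ↔ E (ψ x) (ψ y)) ∧ ψ b = c := by
  obtain ⟨ψ₀, hψ₀⟩ := hiso B C hB hC
  obtain ⟨h, hh, hhc⟩ := hbvt C hC (ψ₀ b) c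
  exact ⟨ψ₀.trans h, fun x y => (hψ₀ x y).trans (hh (ψ₀ x) (ψ₀ y)).symm, hhc⟩

variable (E) in
structure IsPartialIso (F : SetRel V V) : Prop where
  isPartialBij : F.IsPartialBij
  preservesRel : F.PreservesRel E
  dom : IsBlockConvex Γ F.dom
  cod : IsBlockConvex Γ F.cod

variable (E) in
/-- `F` is the part of the extension of `e` built so far; `M` fixes in advance onto which block
each block hanging off the domain of `F` will be mapped. -/
structure IsPartialExtension (Λ : Set V) (e : Equiv.Perm Λ) (F : SetRel V V)
    (M : SetRel (Set V) (Set V)) : Prop extends IsPartialIso E F where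
  setGraph_subset : e.setGraph ⊆ F
  matching_isPartialBij : M.IsPartialBij
  isBlockOf_of_mem : ∀ p ∈ M, IsBlockOf Γ p.1 ∧ IsBlockOf Γ p.2
  exists_root : ∀ p ∈ M, ∃ q ∈ F, q.1 ∈ p.1 ∧ q.2 ∈ p.2
  subset_dom_iff : ∀ p ∈ M, p.1 ⊆ F.dom ↔ p.2 ⊆ F.cod
  mem_dom_of_pending : ∀ D, IsBlockOf Γ D → (D ∩ F.dom).Nonempty → ¬ D ⊆ F.dom → D ∈ M.dom
  mem_cod_of_pending : ∀ D, IsBlockOf Γ D → (D ∩ F.cod).Nonempty → ¬ D ⊆ F.cod → D ∈ M.cod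

variable {Λ : Set V} {e : Equiv.Perm Λ} {F : SetRel V V} {M : SetRel (Set V) (Set V)}
  {B B' : Set V} {y y' : V}

theorem IsPartialIso.sUnion {𝓕 : Set (SetRel V V)} (h𝓕 : ∀ F ∈ 𝓕, IsPartialIso E F)
    (hdir : DirectedOn (· ⊆ ·) 𝓕) : IsPartialIso E (⋃₀ 𝓕) := by
  have hdom : DirectedOn (· ⊆ ·) (SetRel.dom '' 𝓕) :=
    directedOn_image.mpr (hdir.mono' fun _ _ _ _ h => SetRel.dom_mono h)
  have hcod : DirectedOn (· ⊆ ·) (SetRel.cod '' 𝓕) :=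
    directedOn_image.mpr (hdir.mono' fun _ _ _ _ h => SetRel.cod_mono h)
  refine ⟨SetRel.IsPartialBij.sUnion (fun F hF => (h𝓕 F hF).isPartialBij) hdir,
    Set.forall_mem_sUnion_of_directedOn hdir fun F hF => (h𝓕 F hF).preservesRel, ?_, ?_⟩
  · rw [SetRel.dom_sUnion]
    exact IsBlockConvex.sUnion (by rintro _ ⟨F, hF, rfl⟩; exact (h𝓕 F hF).dom) hdom
  · rw [SetRel.cod_sUnion]
    exact IsBlockConvex.sUnion (by rintro _ ⟨F, hF, rfl⟩; exact (h𝓕 F hF).cod) hcod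

variable (E) in
structure IsHangingIso (F : SetRel V V) (B B' : Set V) (y y' : V) (ψ : B ≃ B') : Prop where
  isBlockOf_left : IsBlockOf Γ B
  isBlockOf_right : IsBlockOf Γ B'
  mem : (y, y') ∈ F
  inter_dom : B ∩ F.dom = {y}
  inter_cod : B' ∩ F.cod = {y'}
  map_rel : ∀ x z : B, E x z ↔ E (ψ x) (ψ z)
  mem_setGraph : (y, y') ∈ ψ.setGraph

variable {ψ : B ≃ B'}

theorem IsHangingIso.mem_inter_dom (h : IsHangingIso E F B B' y y' ψ) : y ∈ B ∩ F.dom :=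
  h.inter_dom ▸ rfl

theorem IsHangingIso.mem_inter_cod (h : IsHangingIso E F B B' y y' ψ) : y' ∈ B' ∩ F.cod :=
  h.inter_cod ▸ rfl

theorem IsHangingIso.isPartialIso_union (h : IsHangingIso E F B B' y y' ψ)
    (hF : IsPartialIso E F) : IsPartialIso E (F ∪ ψ.setGraph) := by
  refine ⟨hF.isPartialBij.union_of_inter_subset ψ.isPartialBij_setGraph h.mem h.mem_setGraph
      ?_ ?_, hF.preservesRel.union (ψ.preservesRel_setGraph h.map_rel) hF.isPartialBij
      ψ.isPartialBij_setGraph h.mem h.mem_setGraph ?_ ?_, ?_, ?_⟩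
  · rw [ψ.dom_setGraph, Set.inter_comm, h.inter_dom]
  · rw [ψ.cod_setGraph, Set.inter_comm, h.inter_cod]
  · intro u hu w hw huy hwy
    exact hF.dom.not_rel h.isBlockOf_left h.inter_dom hu (ψ.dom_setGraph ▸ hw) huy hwy
  · intro u hu w hw huy hwy
    exact hF.cod.not_rel h.isBlockOf_right h.inter_cod hu (ψ.cod_setGraph ▸ hw) huy hwy
  · rw [SetRel.dom_union, ψ.dom_setGraph]
    exact hF.dom.union h.isBlockOf_left h.mem_inter_dom
  · rw [SetRel.cod_union, ψ.cod_setGraph]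
    exact hF.cod.union h.isBlockOf_right h.mem_inter_cod

variable {τ : V × V → Set V → Set V}

theorem IsHangingIso.inter_eq_singleton_of_mem_starMatching (h : IsHangingIso E F B B' y y' ψ)
    (hF : IsPartialIso E F)
    (hτ : ∀ q ∈ ψ.setGraph, Set.BijOn (τ q) ((Γ).blocksAt q.1 \ {B}) ((Γ).blocksAt q.2 \ {B'}))
    ⦃p : Set V × Set V⦄ (hp : p ∈ (Γ).starMatching τ ψ.setGraph B F.dom) :
    ∃ q ∈ ψ.setGraph, q.1 ∉ F.dom ∧ q.2 ∉ F.cod ∧ IsBlockOf Γ p.1 ∧ IsBlockOf Γ p.2 ∧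
      p.1 ∩ (F.dom ∪ B) = {q.1} ∧ p.2 ∩ (F.cod ∪ B') = {q.2} := by
  obtain ⟨q, hq, hqS, hp1, hp2⟩ := exists_of_mem_starMatching hτ hp
  have hqB : q.1 ∈ B := ψ.dom_setGraph ▸ ⟨q.2, hq⟩
  have hqB' : q.2 ∈ B' := ψ.cod_setGraph ▸ ⟨q.1, hq⟩
  have hqT : q.2 ∉ F.cod := fun hq2 => hqS <|
    (ψ.isPartialBij_setGraph q hq _ h.mem_setGraph).mpr
      (h.inter_cod ▸ ⟨hqB', hq2⟩ : q.2 ∈ ({y'} : Set V)) ▸ ⟨y', h.mem⟩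
  exact ⟨q, hq, hqS, hqT, hp1.1.1, hp2.1.1,
    hF.dom.inter_union_eq_singleton h.isBlockOf_left h.mem_inter_dom hp1.1.1 hp1.2
      ⟨hp1.1.2, hqB⟩ hqS,
    hF.cod.inter_union_eq_singleton h.isBlockOf_right h.mem_inter_cod hp2.1.1 hp2.2
      ⟨hp2.1.2, hqB'⟩ hqT⟩

theorem IsPartialExtension.isPartialBij_union_starMatching
    (hsys : IsPartialExtension E Λ e F M) (h : IsHangingIso E F B B' y y' ψ)
    (hτ : ∀ q ∈ ψ.setGraph, Set.BijOn (τ q) ((Γ).blocksAt q.1 \ {B}) ((Γ).blocksAt q.2 \ {B'})) :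
    (M ∪ (Γ).starMatching τ ψ.setGraph B F.dom).IsPartialBij := by
  have hnew := h.inter_eq_singleton_of_mem_starMatching hsys.toIsPartialIso hτ
  refine hsys.matching_isPartialBij.union_of_disjoint (isPartialBij_starMatching hτ
    h.isBlockOf_left h.isBlockOf_right (fun q hq => ⟨ψ.dom_setGraph ▸ ⟨q.2, hq⟩,
      ψ.cod_setGraph ▸ ⟨q.1, hq⟩⟩) ψ.isPartialBij_setGraph) ?_ ?_ <;> rw [Set.disjoint_left]
  -- the blocks matched before meet the old domain and codomain, the new ones do not
  · rintro D ⟨D', hDD'⟩ ⟨D'', hp⟩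
    obtain ⟨q, -, hq1, -, -, -, hD, -⟩ := hnew hp
    obtain ⟨r, hr, hr1, -⟩ := hsys.exists_root _ hDD'
    exact hq1 ((hD.subset ⟨hr1, .inl ⟨r.2, hr⟩⟩ : r.1 = q.1) ▸ ⟨r.2, hr⟩)
  · rintro D' ⟨D, hDD'⟩ ⟨D'', hp⟩
    obtain ⟨q, -, -, hq2, -, -, -, hD'⟩ := hnew hp
    obtain ⟨r, hr, -, hr2⟩ := hsys.exists_root _ hDD'
    exact hq2 ((hD'.subset ⟨hr2, .inl ⟨r.1, hr⟩⟩ : r.2 = q.2) ▸ ⟨r.1, hr⟩)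

theorem IsPartialExtension.subset_union_iff
    (hsys : IsPartialExtension E Λ e F M) (h : IsHangingIso E F B B' y y' ψ)
    (hBB' : (B, B') ∈ M) {p : Set V × Set V} (hp : p ∈ M) :
    p.1 ⊆ F.dom ∪ B ↔ p.2 ⊆ F.cod ∪ B' := by
  by_cases hpB : p.1 = B
  · rw [hpB, (hsys.matching_isPartialBij p hp _ hBB').mp hpB]
    exact iff_of_true Set.subset_union_right Set.subset_union_right
  have hpB' : p.2 ≠ B' := mt (hsys.matching_isPartialBij p hp _ hBB').mpr hpB
  obtain ⟨q, hqF, hq1, hq2⟩ := hsys.exists_root p hp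
  obtain ⟨hp1, hp2⟩ := hsys.isBlockOf_of_mem p hp
  rw [hsys.dom.subset_union_iff h.isBlockOf_left h.mem_inter_dom hp1 hpB ⟨q.1, hq1, q.2, hqF⟩,
    hsys.cod.subset_union_iff h.isBlockOf_right h.mem_inter_cod hp2 hpB'
      ⟨q.2, hq2, q.1, hqF⟩]
  exact hsys.subset_dom_iff p hp

theorem IsPartialExtension.mem_dom_union_of_pending
    (hsys : IsPartialExtension E Λ e F M) (ψ : B ≃ B') {D : Set V} (hD : IsBlockOf Γ D)
    (hDS : (D ∩ (F.dom ∪ B)).Nonempty) (hDsub : ¬ D ⊆ F.dom ∪ B) :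
    D ∈ (M ∪ (Γ).starMatching τ ψ.setGraph B F.dom).dom := by
  rw [SetRel.dom_union]
  obtain ⟨x, hxD, hx⟩ := hDS
  by_cases hDS : (D ∩ F.dom).Nonempty
  · exact .inl (hsys.mem_dom_of_pending D hD hDS fun h => hDsub (h.trans Set.subset_union_left))
  have hxB : x ∈ B := hx.resolve_left fun h => hDS ⟨x, hxD, h⟩
  exact .inr ⟨τ (x, ψ ⟨x, hxB⟩) D, _, ψ.mem_setGraph ⟨x, hxB⟩, fun h => hDS ⟨x, hxD, h⟩,
    ⟨⟨hD, hxD⟩, fun h => hDsub (h ▸ Set.subset_union_right)⟩, rfl⟩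

theorem IsPartialExtension.mem_cod_union_of_pending
    (hsys : IsPartialExtension E Λ e F M) (h : IsHangingIso E F B B' y y' ψ)
    (hτ : ∀ q ∈ ψ.setGraph, Set.BijOn (τ q) ((Γ).blocksAt q.1 \ {B}) ((Γ).blocksAt q.2 \ {B'}))
    {D : Set V} (hD : IsBlockOf Γ D) (hDT : (D ∩ (F.cod ∪ B')).Nonempty)
    (hDsub : ¬ D ⊆ F.cod ∪ B') : D ∈ (M ∪ (Γ).starMatching τ ψ.setGraph B F.dom).cod := by
  rw [SetRel.cod_union]
  obtain ⟨x, hxD, hx⟩ := hDT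
  by_cases hDT : (D ∩ F.cod).Nonempty
  · exact .inl (hsys.mem_cod_of_pending D hD hDT fun h => hDsub (h.trans Set.subset_union_left))
  have hxB' : x ∈ B' := hx.resolve_left fun h => hDT ⟨x, hxD, h⟩
  have hq := ψ.mem_setGraph (ψ.symm ⟨x, hxB'⟩)
  rw [ψ.apply_symm_apply] at hq
  refine .inr (mem_cod_starMatching hτ hq (fun hx => hDT ⟨x, hxD, ?_⟩)
    ⟨⟨hD, hxD⟩, fun h => hDsub (h ▸ Set.subset_union_right)⟩)
  -- the only vertex of `B` in the old domain is `y`, and `y'` is in the old codomain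
  have hxy : x = y' := (ψ.isPartialBij_setGraph _ hq _ h.mem_setGraph).mp
    (h.inter_dom ▸ ⟨(ψ.symm ⟨x, hxB'⟩).2, hx⟩ : _ ∈ ({y} : Set V))
  exact hxy ▸ ⟨y, h.mem⟩

theorem IsPartialExtension.union_setGraph
    (hsys : IsPartialExtension E Λ e F M) (hnt : ∀ D, IsBlockOf Γ D → D.Nontrivial)
    (h : IsHangingIso E F B B' y y' ψ) (hBB' : (B, B') ∈ M)
    (hτ : ∀ q ∈ ψ.setGraph, Set.BijOn (τ q) ((Γ).blocksAt q.1 \ {B}) ((Γ).blocksAt q.2 \ {B'})) :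
    IsPartialExtension E Λ e (F ∪ ψ.setGraph) (M ∪ (Γ).starMatching τ ψ.setGraph B F.dom) := by
  have hnew := h.inter_eq_singleton_of_mem_starMatching hsys.toIsPartialIso hτ
  have hdom : (F ∪ ψ.setGraph).dom = F.dom ∪ B := by rw [SetRel.dom_union, ψ.dom_setGraph]
  have hcod : (F ∪ ψ.setGraph).cod = F.cod ∪ B' := by rw [SetRel.cod_union, ψ.cod_setGraph]
  refine { h.isPartialIso_union hsys.toIsPartialIso with
    setGraph_subset := hsys.setGraph_subset.trans Set.subset_union_left
    matching_isPartialBij := hsys.isPartialBij_union_starMatching h hτ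
    isBlockOf_of_mem := ?_
    exists_root := ?_
    subset_dom_iff := ?_
    mem_dom_of_pending := fun D hD hDS hDsub =>
      hsys.mem_dom_union_of_pending ψ hD (hdom ▸ hDS) (hdom ▸ hDsub)
    mem_cod_of_pending := fun D hD hDT hDsub =>
      hsys.mem_cod_union_of_pending h hτ hD (hcod ▸ hDT) (hcod ▸ hDsub) }
  · rintro p (hp | hp)
    · exact hsys.isBlockOf_of_mem p hp
    · obtain ⟨-, -, -, -, hp1, hp2, -⟩ := hnew hp
      exact ⟨hp1, hp2⟩
  · rintro p (hp | hp)
    · obtain ⟨q, hq, hq1, hq2⟩ := hsys.exists_root p hp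
      exact ⟨q, .inl hq, hq1, hq2⟩
    · obtain ⟨q, hq, -, -, -, -, hq1, hq2⟩ := hnew hp
      exact ⟨q, .inr hq, (hq1.symm.subset rfl).1, (hq2.symm.subset rfl).1⟩
  · rw [hdom, hcod]
    rintro p (hp | hp)
    · exact hsys.subset_union_iff h hBB' hp
    · obtain ⟨q, -, -, -, hp1, hp2, hq1, hq2⟩ := hnew hp
      exact iff_of_false
        (fun hsub => (hnt _ hp1).not_subset_singleton (hq1 ▸ Set.subset_inter subset_rfl hsub))
        (fun hsub => (hnt _ hp2).not_subset_singleton (hq2 ▸ Set.subset_inter subset_rfl hsub))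

theorem isPartialExtension_setGraph (hvt : ∀ a b, ∃ φ : Γ ≃g Γ, φ a = b)
    (hΛ : IsBlockOf Γ Λ) (he : e ∈ BlockAut E Λ) : ∃ M, IsPartialExtension E Λ e e.setGraph M := by
  have hR : ∀ q ∈ e.setGraph, q.1 ∈ Λ ∧ q.2 ∈ Λ := fun q hq =>
    ⟨e.dom_setGraph ▸ ⟨q.2, hq⟩, e.cod_setGraph ▸ ⟨q.1, hq⟩⟩
  obtain ⟨τ, hτ⟩ := exists_bijOn_blocksAt hvt hΛ hΛ hR
  have hnot : ∀ D, IsBlockOf Γ D → D ∉ ({Λ} : Set (Set V)) → ¬ D ⊆ Λ := fun D hD hDΛ h =>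
    hDΛ (hD.eq_of_subset hΛ.isNonseparable h)
  refine ⟨(Γ).starMatching τ e.setGraph Λ ∅,
    ⟨e.isPartialBij_setGraph, e.preservesRel_setGraph fun x y => (he x y).symm,
      by rw [e.dom_setGraph]; exact hΛ.isBlockConvex,
      by rw [e.cod_setGraph]; exact hΛ.isBlockConvex⟩,
    subset_rfl, isPartialBij_starMatching hτ hΛ hΛ hR e.isPartialBij_setGraph,
    fun p hp => ?_, fun p hp => ?_, fun p hp => ?_, ?_, ?_⟩
  · obtain ⟨_, _, _, hp1, hp2⟩ := exists_of_mem_starMatching hτ hp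
    exact ⟨hp1.1.1, hp2.1.1⟩
  · obtain ⟨q, hq, _, hp1, hp2⟩ := exists_of_mem_starMatching hτ hp
    exact ⟨q, hq, hp1.1.2, hp2.1.2⟩
  · obtain ⟨_, _, _, hp1, hp2⟩ := exists_of_mem_starMatching hτ hp
    rw [e.dom_setGraph, e.cod_setGraph]
    exact iff_of_false (hnot _ hp1.1.1 hp1.2) (hnot _ hp2.1.1 hp2.2)
  · rw [e.dom_setGraph]
    rintro D hD ⟨c, hcD, hc⟩ hDΛ
    exact ⟨τ (c, e ⟨c, hc⟩) D, _, e.mem_setGraph ⟨c, hc⟩, Set.notMem_empty _,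
      ⟨⟨hD, hcD⟩, fun h => hDΛ (h ▸ subset_rfl)⟩, rfl⟩
  · rw [e.cod_setGraph]
    rintro D hD ⟨c, hcD, hc⟩ hDΛ
    have hq := e.mem_setGraph (e.symm ⟨c, hc⟩)
    rw [e.apply_symm_apply] at hq
    exact mem_cod_starMatching hτ hq (Set.notMem_empty _)
      ⟨⟨hD, hcD⟩, fun h => hDΛ (h ▸ subset_rfl)⟩

theorem IsPartialIso.exists_subset_dom {𝓕 : Set (SetRel V V)}
    (h𝓕 : ∀ F ∈ 𝓕, IsPartialIso E F) (hdir : DirectedOn (· ⊆ ·) 𝓕) {D : Set V}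
    (hD : IsBlockOf Γ D) (hDnt : D.Nontrivial) (h : D ⊆ SetRel.dom (⋃₀ 𝓕)) :
    ∃ F ∈ 𝓕, D ⊆ F.dom := by
  rw [SetRel.dom_sUnion] at h
  obtain ⟨_, ⟨F, hF, rfl⟩, hDF⟩ := IsBlockConvex.exists_subset_of_subset_sUnion
    (by rintro _ ⟨F, hF, rfl⟩; exact (h𝓕 F hF).dom)
    (directedOn_image.mpr (hdir.mono' fun _ _ _ _ h => SetRel.dom_mono h)) hD hDnt h
  exact ⟨F, hF, hDF⟩

theorem IsPartialIso.exists_subset_cod {𝓕 : Set (SetRel V V)}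
    (h𝓕 : ∀ F ∈ 𝓕, IsPartialIso E F) (hdir : DirectedOn (· ⊆ ·) 𝓕) {D : Set V}
    (hD : IsBlockOf Γ D) (hDnt : D.Nontrivial) (h : D ⊆ SetRel.cod (⋃₀ 𝓕)) :
    ∃ F ∈ 𝓕, D ⊆ F.cod := by
  rw [SetRel.cod_sUnion] at h
  obtain ⟨_, ⟨F, hF, rfl⟩, hDF⟩ := IsBlockConvex.exists_subset_of_subset_sUnion
    (by rintro _ ⟨F, hF, rfl⟩; exact (h𝓕 F hF).cod)
    (directedOn_image.mpr (hdir.mono' fun _ _ _ _ h => SetRel.cod_mono h)) hD hDnt h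
  exact ⟨F, hF, hDF⟩

theorem IsPartialExtension.subset_dom_sUnion_iff
    {c : Set (SetRel V V × SetRel (Set V) (Set V))}
    (hc : ∀ t ∈ c, IsPartialExtension E Λ e t.1 t.2) (hdir : DirectedOn (· ≤ ·) c)
    (hnt : ∀ D, IsBlockOf Γ D → D.Nontrivial) {t : SetRel V V × SetRel (Set V) (Set V)}
    (ht : t ∈ c) {p : Set V × Set V} (hp : p ∈ t.2) :
    p.1 ⊆ SetRel.dom (⋃₀ (Prod.fst '' c)) ↔ p.2 ⊆ SetRel.cod (⋃₀ (Prod.fst '' c)) := by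
  have hdir₁ : DirectedOn (· ⊆ ·) (Prod.fst '' c) :=
    directedOn_image.mpr (hdir.mono' fun _ _ _ _ h => h.1)
  have hc₁ : ∀ F ∈ Prod.fst '' c, IsPartialIso E F := by
    rintro _ ⟨t, ht, rfl⟩
    exact (hc t ht).toIsPartialIso
  have hle : ∀ u ∈ c, u.1 ⊆ ⋃₀ (Prod.fst '' c) := fun u hu =>
    Set.subset_sUnion_of_mem ⟨u, hu, rfl⟩
  obtain ⟨hp1, hp2⟩ := (hc t ht).isBlockOf_of_mem p hp
  constructor
  · intro h
    obtain ⟨_, ⟨u, hu, rfl⟩, hpu⟩ := IsPartialIso.exists_subset_dom hc₁ hdir₁ hp1 (hnt _ hp1) h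
    obtain ⟨w, hw, htw, huw⟩ := hdir t ht u hu
    exact (((hc w hw).subset_dom_iff p (htw.2 hp)).mp (hpu.trans (SetRel.dom_mono huw.1))).trans
      (SetRel.cod_mono (hle w hw))
  · intro h
    obtain ⟨_, ⟨u, hu, rfl⟩, hpu⟩ := IsPartialIso.exists_subset_cod hc₁ hdir₁ hp2 (hnt _ hp2) h
    obtain ⟨w, hw, htw, huw⟩ := hdir t ht u hu
    exact (((hc w hw).subset_dom_iff p (htw.2 hp)).mpr (hpu.trans (SetRel.cod_mono huw.1))).trans
      (SetRel.dom_mono (hle w hw))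

theorem isPartialExtension_sSup {c : Set (SetRel V V × SetRel (Set V) (Set V))}
    (hc : ∀ t ∈ c, IsPartialExtension E Λ e t.1 t.2) (hchain : IsChain (· ≤ ·) c)
    (hne : c.Nonempty) (hnt : ∀ D, IsBlockOf Γ D → D.Nontrivial) :
    IsPartialExtension E Λ e (sSup c).1 (sSup c).2 := by
  have hdir := hchain.directedOn
  have hle : ∀ t ∈ c, t.1 ⊆ ⋃₀ (Prod.fst '' c) ∧ t.2 ⊆ ⋃₀ (Prod.snd '' c) := fun t ht =>
    ⟨Set.subset_sUnion_of_mem ⟨t, ht, rfl⟩, Set.subset_sUnion_of_mem ⟨t, ht, rfl⟩⟩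
  obtain ⟨t₀, ht₀⟩ := hne
  simp only [Prod.fst_sSup, Prod.snd_sSup, Set.sSup_eq_sUnion]
  refine ⟨IsPartialIso.sUnion (by rintro _ ⟨t, ht, rfl⟩; exact (hc t ht).toIsPartialIso)
      (directedOn_image.mpr (hdir.mono' fun _ _ _ _ h => h.1)),
    (hc t₀ ht₀).setGraph_subset.trans (hle t₀ ht₀).1,
    SetRel.IsPartialBij.sUnion (by rintro _ ⟨t, ht, rfl⟩; exact (hc t ht).matching_isPartialBij)
      (directedOn_image.mpr (hdir.mono' fun _ _ _ _ h => h.2)), ?_, ?_, ?_, ?_, ?_⟩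
  · rintro p ⟨_, ⟨t, ht, rfl⟩, hp⟩
    exact (hc t ht).isBlockOf_of_mem p hp
  · rintro p ⟨_, ⟨t, ht, rfl⟩, hp⟩
    obtain ⟨q, hq, hq1, hq2⟩ := (hc t ht).exists_root p hp
    exact ⟨q, (hle t ht).1 hq, hq1, hq2⟩
  · rintro p ⟨_, ⟨t, ht, rfl⟩, hp⟩
    exact IsPartialExtension.subset_dom_sUnion_iff hc hdir hnt ht hp
  · rintro D hD ⟨x, hxD, _, _, ⟨t, ht, rfl⟩, hx⟩ hDsub
    obtain ⟨D', hD'⟩ := (hc t ht).mem_dom_of_pending D hD ⟨x, hxD, _, hx⟩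
      fun h => hDsub (h.trans (SetRel.dom_mono (hle t ht).1))
    exact ⟨D', (hle t ht).2 hD'⟩
  · rintro D hD ⟨x, hxD, _, _, ⟨t, ht, rfl⟩, hx⟩ hDsub
    obtain ⟨D', hD'⟩ := (hc t ht).mem_cod_of_pending D hD ⟨x, hxD, _, hx⟩
      fun h => hDsub (h.trans (SetRel.cod_mono (hle t ht).1))
    exact ⟨D', (hle t ht).2 hD'⟩

theorem IsPartialExtension.exists_extension (hsys : IsPartialExtension E Λ e F M)
    (hvt : ∀ a b, ∃ φ : Γ ≃g Γ, φ a = b)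
    (hiso : ∀ B C : Set V, IsBlockOf Γ B → IsBlockOf Γ C → BlocksIsomorphic E B C)
    (hbvt : ∀ B : Set V, IsBlockOf Γ B → ∀ a b : B, ∃ e ∈ BlockAut E B, e a = b)
    (hnt : ∀ D, IsBlockOf Γ D → D.Nontrivial) (hconn : (Γ).Preconnected)
    (hne : F.dom.Nonempty) (hdom : F.dom ≠ Set.univ) :
    ∃ F' M', IsPartialExtension E Λ e F' M' ∧ F ⊆ F' ∧ M ⊆ M' ∧ ¬ F' ⊆ F := by
  obtain ⟨B, hB, hBS, hBdom⟩ := hconn.exists_isBlockOf_not_subset hne hdom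
  obtain ⟨B', hBB'⟩ := hsys.mem_dom_of_pending B hB hBS hBdom
  have hB' := (hsys.isBlockOf_of_mem _ hBB').2
  obtain ⟨q, hq, hq1, hq2⟩ := hsys.exists_root _ hBB'
  have hB'cod : ¬ B' ⊆ F.cod := mt (hsys.subset_dom_iff _ hBB').mpr hBdom
  obtain ⟨ψ, hψ, hψq⟩ := exists_blockIso_apply_eq hiso hbvt hB hB' ⟨q.1, hq1⟩ ⟨q.2, hq2⟩
  have h : IsHangingIso E F B B' q.1 q.2 ψ :=
    ⟨hB, hB', hq, hsys.dom.inter_eq_singleton hB ⟨hq1, q.2, hq⟩ hBdom,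
      hsys.cod.inter_eq_singleton hB' ⟨hq2, q.1, hq⟩ hB'cod, hψ,
      by simpa [hψq] using ψ.mem_setGraph ⟨q.1, hq1⟩⟩
  obtain ⟨τ, hτ⟩ := exists_bijOn_blocksAt hvt hB hB' fun r hr =>
    ⟨ψ.dom_setGraph ▸ ⟨r.2, hr⟩, ψ.cod_setGraph ▸ ⟨r.1, hr⟩⟩
  obtain ⟨z, hzB, hzS⟩ := Set.not_subset.mp hBdom
  exact ⟨_, _, hsys.union_setGraph hnt h hBB' hτ, Set.subset_union_left, Set.subset_union_left,
    fun hF => hzS ⟨_, hF (.inr (ψ.mem_setGraph ⟨z, hzB⟩))⟩⟩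

theorem IsPartialExtension.cod_eq_univ (hsys : IsPartialExtension E Λ e F M)
    (hconn : (Γ).Preconnected) (hne : F.cod.Nonempty) (hdom : F.dom = Set.univ) :
    F.cod = Set.univ := by
  by_contra hcod
  obtain ⟨D', hD', hD'T, hD'cod⟩ := hconn.exists_isBlockOf_not_subset hne hcod
  obtain ⟨D, hDD'⟩ := hsys.mem_cod_of_pending D' hD' hD'T hD'cod
  exact hD'cod ((hsys.subset_dom_iff _ hDD').mp (hdom ▸ Set.subset_univ D))

theorem exists_isPartialExtension_dom_eq_univ [Nontrivial V] (hconn : (Γ).Preconnected)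
    (hvt : ∀ a b, ∃ φ : Γ ≃g Γ, φ a = b)
    (hiso : ∀ B C : Set V, IsBlockOf Γ B → IsBlockOf Γ C → BlocksIsomorphic E B C)
    (hbvt : ∀ B : Set V, IsBlockOf Γ B → ∀ a b : B, ∃ e ∈ BlockAut E B, e a = b)
    (hΛ : IsBlockOf Γ Λ) (he : e ∈ BlockAut E Λ) :
    ∃ F M, IsPartialExtension E Λ e F M ∧ F.dom = Set.univ := by
  have hnt := fun D (hD : IsBlockOf Γ D) => hD.nontrivial hconn
  obtain ⟨M₀, h₀⟩ := isPartialExtension_setGraph hvt hΛ he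
  obtain ⟨⟨F, M⟩, -, hmax⟩ := zorn_le_nonempty₀
    {t : SetRel V V × SetRel (Set V) (Set V) | IsPartialExtension E Λ e t.1 t.2}
    (fun c hc hchain t ht => ⟨sSup c,
      isPartialExtension_sSup (fun _ h => hc h) hchain ⟨t, ht⟩ hnt, fun _ => le_sSup⟩)
    (e.setGraph, M₀) h₀
  refine ⟨F, M, hmax.prop, by_contra fun hdom => ?_⟩
  obtain ⟨a, ha⟩ := hΛ.isNonseparable.nonempty
  obtain ⟨F', M', h', hFF', hMM', hF'F⟩ := hmax.prop.exists_extension hvt hiso hbvt hnt hconn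
    ⟨a, _, hmax.prop.setGraph_subset (e.mem_setGraph ⟨a, ha⟩)⟩ hdom
  exact hF'F (hmax.2 (y := (F', M')) h' ⟨hFF', hMM'⟩).1

end PartialExtension

theorem Equiv.Perm.image_eq_of_forall_apply_eq {V : Type*} {Λ : Set V} {g : Equiv.Perm V}
    {e : Equiv.Perm Λ} (h : ∀ (a : V) (ha : a ∈ Λ), g a = (e ⟨a, ha⟩ : V)) : g '' Λ = Λ := by
  ext w
  refine ⟨?_, fun hw => ⟨e.symm ⟨w, hw⟩, (e.symm ⟨w, hw⟩).2, by simp [h]⟩⟩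
  rintro ⟨a, ha, rfl⟩
  exact h a ha ▸ (e ⟨a, ha⟩).2

theorem stmt9_general {V : Type*} (E : V → V → Prop)
    (hvt : ∀ a b : V, ∃ g : Equiv.Perm V, DPreserves E g ∧ g a = b)
    (hconn1 : HasConnOne (SimpleGraph.fromRel E))
    (hbvt : ∀ B : Set V, IsBlockOf (SimpleGraph.fromRel E) B →
      ∀ a b : B, ∃ e ∈ BlockAut E B, e a = b)
    (hiso : ∀ B C : Set V, IsBlockOf (SimpleGraph.fromRel E) B →
      IsBlockOf (SimpleGraph.fromRel E) C → BlocksIsomorphic E B C)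
    (Λ : Set V) (hΛ : IsBlockOf (SimpleGraph.fromRel E) Λ)
    (e : Equiv.Perm Λ) (he : e ∈ BlockAut E Λ) :
    ∃ g : Equiv.Perm V, DPreserves E g ∧ g '' Λ = Λ ∧
      ∀ (a : V) (ha : a ∈ Λ), g a = (e ⟨a, ha⟩ : V) := by
  have hconn := hconn1.1.preconnected
  have : Nontrivial V := hconn1.2.choose_spec.nontrivial
  have hvt' : ∀ a b, ∃ φ : SimpleGraph.fromRel E ≃g SimpleGraph.fromRel E, φ a = b :=
    fun a b => let ⟨_, hg, hgab⟩ := hvt a b; ⟨hg.toIso, hgab⟩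
  obtain ⟨F, M, hsys, hdom⟩ := exists_isPartialExtension_dom_eq_univ hconn hvt' hiso hbvt hΛ he
  obtain ⟨a, ha⟩ := hΛ.isNonseparable.nonempty
  obtain ⟨g, hg⟩ := hsys.isPartialBij.exists_perm hdom
    (hsys.cod_eq_univ hconn ⟨_, _, hsys.setGraph_subset (e.mem_setGraph ⟨a, ha⟩)⟩ hdom)
  have hgΛ : ∀ (a : V) (ha : a ∈ Λ), g a = (e ⟨a, ha⟩ : V) := fun a ha =>
    (hsys.isPartialBij _ (hg a) _ (hsys.setGraph_subset (e.mem_setGraph ⟨a, ha⟩))).mp rfl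
  exact ⟨g, fun a b => (hsys.preservesRel _ (hg a) _ (hg b)).symm,
    Equiv.Perm.image_eq_of_forall_apply_eq hgΛ, hgΛ⟩

/-- In a vertex-transitive connectivity-one graph whose blocks are
vertex-transitive, pairwise isomorphic and have at least three vertices, every
automorphism of a block extends to an automorphism of the whole graph. -/
theorem stmt9 {V : Type*} (E : V → V → Prop)
    (hvt : ∀ a b : V, ∃ g : Equiv.Perm V, DPreserves E g ∧ g a = b)
    (hconn1 : HasConnOne (SimpleGraph.fromRel E))
    (hbvt : ∀ B : Set V, IsBlockOf (SimpleGraph.fromRel E) B →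
      ∀ a b : B, ∃ e ∈ BlockAut E B, e a = b)
    (hiso : ∀ B C : Set V, IsBlockOf (SimpleGraph.fromRel E) B →
      IsBlockOf (SimpleGraph.fromRel E) C → BlocksIsomorphic E B C)
    (hblocks3 : ∀ B : Set V, IsBlockOf (SimpleGraph.fromRel E) B → HasThreeVertices B)
    (Λ : Set V) (hΛ : IsBlockOf (SimpleGraph.fromRel E) Λ)
    (e : Equiv.Perm Λ) (he : e ∈ BlockAut E Λ) :
    ∃ g : Equiv.Perm V, DPreserves E g ∧ g '' Λ = Λ ∧
      ∀ (a : V) (ha : a ∈ Λ), g a = (e ⟨a, ha⟩ : V) :=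
  stmt9_general E hvt hconn1 hbvt hiso Λ hΛ e he
end
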